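/- arXiv:1902.06695 — 8 statements merged into one kernel-verified Lean document; each statement's English description precedes it below -/
import Mathlib

section
/- For every complex number z with Re(z) > 1, the Riemann zeta function satisfies ζ(z) = 1 + ∑_{r ∈ S} 1/(r^z − 1), where S is the set of integers r ≥ 2 that are not perfect powers. -/
/-- The set of integers `r ≥ 2` that are not perfect powers, i.e. not of the form
`a ^ k` with `a ≥ 2` and `k ≥ 2`. -/
def nonPerfectPowers : Set ℕ :=
  {r | 2 ≤ r ∧ ¬ ∃ a k : ℕ, 2 ≤ a ∧ 2 ≤ k ∧ a ^ k = r}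

/-- gcd of the exponents in the prime factorization. -/
def expGcd (n : ℕ) : ℕ := n.factorization.support.gcd n.factorization

lemma expGcd_pow (r k : ℕ) (hk : k ≠ 0) : expGcd (r ^ k) = k * expGcd r := by
  unfold expGcd
  rw [Nat.factorization_pow, Finsupp.support_smul_eq hk]
  have : ∀ p ∈ r.factorization.support, (k • r.factorization) p = k * r.factorization p := by
    intro p _; simp
  rw [Finset.gcd_congr rfl this]
  simpa using Finset.gcd_mul_left (f := ⇑r.factorization) (a := k)
    (s := r.factorization.support)

lemma expGcd_eq_one {r : ℕ} (hr : r ∈ nonPerfectPowers) : expGcd r = 1 := by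
  obtain ⟨hr2, hnp⟩ := hr
  have hr0 : r ≠ 0 := by omega
  have hdvd : ∀ p ∈ r.factorization.support, expGcd r ∣ r.factorization p :=
    fun p hp => Finset.gcd_dvd hp
  obtain ⟨p, hp, hpdvd⟩ := Nat.exists_prime_and_dvd (show r ≠ 1 by omega)
  have hpmem : p ∈ r.factorization.support := by
    rw [Nat.support_factorization, Nat.mem_primeFactors]
    exact ⟨hp, hpdvd, hr0⟩
  have hg0 : expGcd r ≠ 0 := by
    intro h
    have := Finset.gcd_eq_zero_iff.mp h p hpmem
    exact (Finsupp.mem_support_iff.mp hpmem) this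
  by_contra hg1
  have hg2 : 2 ≤ expGcd r := by omega
  set g := expGcd r with hg
  set m := r.factorization.prod fun p e => p ^ (e / g) with hm
  have hmg : m ^ g = r := by
    have step : m ^ g = r.factorization.prod fun p e => p ^ e := by
      rw [hm, Finsupp.prod, ← Finset.prod_pow, Finsupp.prod]
      apply Finset.prod_congr rfl
      intro q hq
      rw [← pow_mul, Nat.div_mul_cancel (hdvd q hq)]
    rw [step, Nat.factorization_prod_pow_eq_self hr0]
  have hm0 : m ≠ 0 := by
    intro h; rw [h, zero_pow hg0] at hmg; omega
  have hm1 : m ≠ 1 := by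
    intro h; rw [h, one_pow] at hmg; omega
  exact hnp ⟨m, g, by omega, hg2, hmg⟩

lemma exists_rep : ∀ n : ℕ, 2 ≤ n → ∃ r k : ℕ, r ∈ nonPerfectPowers ∧ r ^ (k + 1) = n := by
  intro n
  induction n using Nat.strong_induction_on with
  | _ n IH =>
    intro hn
    by_cases h : ∃ a k : ℕ, 2 ≤ a ∧ 2 ≤ k ∧ a ^ k = n
    · obtain ⟨a, j, ha, hj, hak⟩ := h
      have halt : a < n := by
        calc a < a ^ 2 := by nlinarith
        _ ≤ a ^ j := Nat.pow_le_pow_right (by omega) hj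
        _ = n := hak
      obtain ⟨r, k, hr, hrk⟩ := IH a halt ha
      refine ⟨r, (k + 1) * j - 1, hr, ?_⟩
      have : (k + 1) * j - 1 + 1 = (k + 1) * j := by
        have : 1 ≤ (k + 1) * j := Nat.one_le_iff_ne_zero.mpr (by simp; omega)
        omega
      rw [this, pow_mul, hrk, hak]
    · exact ⟨n, 0, ⟨hn, h⟩, by simp⟩

lemma rep_unique {r1 r2 k1 k2 : ℕ} (h1 : r1 ∈ nonPerfectPowers) (h2 : r2 ∈ nonPerfectPowers)
    (h : r1 ^ (k1 + 1) = r2 ^ (k2 + 1)) : r1 = r2 ∧ k1 = k2 := by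
  have e1 : expGcd (r1 ^ (k1 + 1)) = (k1 + 1) * 1 := by
    rw [expGcd_pow _ _ (by omega), expGcd_eq_one h1]
  have e2 : expGcd (r2 ^ (k2 + 1)) = (k2 + 1) * 1 := by
    rw [expGcd_pow _ _ (by omega), expGcd_eq_one h2]
  rw [h, e2] at e1
  have hk : k1 = k2 := by omega
  subst hk
  exact ⟨Nat.pow_left_injective (n := k1 + 1) (by omega) h, rfl⟩

open Complex in
lemma tsum_geom_aux (z : ℂ) (hz : 1 < z.re) (r : ℕ) (hr : 2 ≤ r) :
    ∑' k : ℕ, 1 / ((r ^ (k + 1) : ℕ) : ℂ) ^ z = 1 / ((r : ℂ) ^ z - 1) := by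
  set w := ((r : ℕ) : ℂ) ^ z with hwdef
  have h1w : 1 < ‖w‖ := by
    rw [hwdef, Complex.norm_natCast_cpow_of_pos (by omega) z]
    exact (Real.one_lt_rpow_iff_of_pos (by positivity)).mpr
      (Or.inl ⟨by exact_mod_cast hr.trans_lt' one_lt_two, by linarith⟩)
  have hw0 : w ≠ 0 := by intro h; rw [h] at h1w; norm_num at h1w
  have hw1 : w - 1 ≠ 0 := by
    intro h; have : w = 1 := by linear_combination h
    rw [this] at h1w; simp at h1w
  have hu : ‖w⁻¹‖ < 1 := by rw [norm_inv]; exact inv_lt_one_of_one_lt₀ h1w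
  have hterm : ∀ k : ℕ, 1 / ((r ^ (k + 1) : ℕ) : ℂ) ^ z = w⁻¹ * (w⁻¹) ^ k := by
    intro k
    push_cast
    rw [← Complex.cpow_nat_mul' (n := k + 1) (x := (r : ℂ))
      (by rw [Complex.natCast_arg]; simpa using Real.pi_pos)
      (by rw [Complex.natCast_arg]; simpa using Real.pi_pos.le) z,
      Complex.cpow_nat_mul]
    try rw [one_div, ← inv_pow, pow_succ']
    try push_cast [hwdef]
    try ring
  rw [tsum_congr hterm, tsum_mul_left, tsum_geometric_of_norm_lt_one hu]
  have h1u : 1 - w⁻¹ ≠ 0 := by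
    intro h
    have : w⁻¹ = 1 := by linear_combination -h
    rw [this] at hu; simp at hu
  field_simp
  try ring

theorem riemannZeta_eq_one_add_tsum_nonPerfectPowers
    (z : ℂ) (hz : 1 < z.re) :
    riemannZeta z = 1 + ∑' r : nonPerfectPowers, 1 / (((r : ℕ) : ℂ) ^ z - 1) := by
  classical
  set f : ℕ → ℂ := fun n => 1 / (n : ℂ) ^ z with hfdef
  have hz0 : z ≠ 0 := Complex.ne_zero_of_one_lt_re hz
  have hf : Summable f := Complex.summable_one_div_nat_cpow.mpr hz
  set v : ↥nonPerfectPowers × ℕ → ℕ := fun x => (x.1 : ℕ) ^ (x.2 + 1) with hvdef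
  have hv2 : ∀ x, 2 ≤ v x := by
    rintro ⟨⟨r, hr⟩, k⟩
    exact le_trans hr.1 (Nat.le_self_pow (by omega) r)
  have hbij : Function.Bijective (fun x => v x - 2) := by
    constructor
    · rintro x y h
      have h' : v x = v y := by have := hv2 x; have := hv2 y; simp only at h; omega
      obtain ⟨hr, hk⟩ := rep_unique x.1.2 y.1.2 h'
      exact Prod.ext (Subtype.ext hr) hk
    · intro n
      obtain ⟨r, k, hr, hrk⟩ := exists_rep (n + 2) (by omega)
      exact ⟨⟨⟨r, hr⟩, k⟩, by simp only [hvdef]; omega⟩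
  set e : ↥nonPerfectPowers × ℕ ≃ ℕ := Equiv.ofBijective _ hbij with hedef
  have hev : ∀ x, e x + 2 = v x := by
    intro x; have := hv2 x
    simp only [hedef, Equiv.ofBijective_apply]; omega
  have hkey : ∀ x, f (v x) = (fun n => f (n + 2)) (e x) := by
    intro x; simp only [hev x]
  have hsum2 : Summable (fun n => f (n + 2)) := (summable_nat_add_iff 2).mpr hf
  have hF : Summable (fun x => f (v x)) :=
    (e.summable_iff.mpr hsum2).congr (fun x => (hkey x).symm)
  have h1 : riemannZeta z = ∑' n, f n := zeta_eq_tsum_one_div_nat_cpow hz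
  have h2 : ∑ i ∈ Finset.range 2, f i + ∑' i, f (i + 2) = ∑' i, f i :=
    Summable.sum_add_tsum_nat_add 2 hf
  have h3 : ∑ i ∈ Finset.range 2, f i = 1 := by
    rw [Finset.sum_range_succ, Finset.sum_range_one]
    simp [hfdef, Complex.zero_cpow hz0]
  have h4 : ∑' i : ℕ, f (i + 2) = ∑' x : ↥nonPerfectPowers × ℕ, f (v x) :=
    (e.tsum_eq (fun n => f (n + 2))).symm.trans (tsum_congr fun x => (hkey x).symm)
  have h5 : ∑' x : ↥nonPerfectPowers × ℕ, f (v x)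
      = ∑' r : nonPerfectPowers, ∑' k : ℕ, f ((r : ℕ) ^ (k + 1)) := Summable.tsum_prod hF
  have h6 : ∀ r : nonPerfectPowers, ∑' k : ℕ, f ((r : ℕ) ^ (k + 1))
      = 1 / (((r : ℕ) : ℂ) ^ z - 1) := fun r => tsum_geom_aux z hz (r : ℕ) r.2.1
  rw [h1, ← h2, h3, h4, h5, tsum_congr h6]
end

section
/- For every complex number z with Re(z) > 1, the Riemann zeta function satisfies ζ(z) = 1 + ∑_{r ∈ S} ( cosh(z·log r/2)/(2·sinh(z·log r/2)) − 1/2 ), where S is the set of integers r ≥ 2 that are not perfect powers. -/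
namespace nonPerfectPowers

lemma eq_one_of_pow_mem {c j : ℕ} (h : c ^ j ∈ nonPerfectPowers) : j = 1 := by
  obtain ⟨h2, hnot⟩ := h
  have hc : 2 ≤ c := by
    by_contra! hc
    have := pow_le_one₀ (n := j) (Nat.zero_le c) (by omega)
    omega
  have hj : j ≠ 0 := by rintro rfl; simp at h2
  by_contra hj1
  exact hnot ⟨c, j, hc, by omega, rfl⟩

lemma eq_of_pow_eq_pow {r s k m : ℕ} (hr : r ∈ nonPerfectPowers) (hs : s ∈ nonPerfectPowers)
    (hk : k ≠ 0) (h : r ^ k = s ^ m) : r = s ∧ k = m := by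
  obtain ⟨c, rfl, rfl⟩ := Nat.exists_eq_pow_of_pow_eq_pow (.inl hk) h
  have hm := Nat.eq_of_dvd_of_div_eq_one (Nat.gcd_dvd_right k m) (eq_one_of_pow_mem hr)
  have hk' := Nat.eq_of_dvd_of_div_eq_one (Nat.gcd_dvd_left k m) (eq_one_of_pow_mem hs)
  rw [eq_one_of_pow_mem hr, eq_one_of_pow_mem hs]
  exact ⟨rfl, hk'.symm.trans hm⟩

lemma exists_pow_eq {n : ℕ} (hn : 2 ≤ n) : ∃ r ∈ nonPerfectPowers, ∃ k, r ^ (k + 1) = n := by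
  induction n using Nat.strong_induction_on with
  | _ n ih =>
    by_cases h : ∃ a k : ℕ, 2 ≤ a ∧ 2 ≤ k ∧ a ^ k = n
    · obtain ⟨a, k, ha, hk, rfl⟩ := h
      obtain ⟨r, hr, j, rfl⟩ := ih a (lt_self_pow₀ ha hk) ha
      have hjk : 1 ≤ (j + 1) * k := Nat.one_le_iff_ne_zero.2 (by positivity)
      exact ⟨r, hr, (j + 1) * k - 1, by rw [Nat.sub_add_cancel hjk, pow_mul]⟩
    · exact ⟨n, ⟨hn, h⟩, 0, pow_one n⟩

def powSucc (p : nonPerfectPowers × ℕ) : ℕ := (p.1 : ℕ) ^ (p.2 + 1)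

lemma powSucc_injective : Function.Injective powSucc := by
  rintro ⟨r, k⟩ ⟨s, m⟩ h
  obtain ⟨hrs, hkm⟩ := eq_of_pow_eq_pow r.2 s.2 k.succ_ne_zero h
  exact Prod.ext (Subtype.ext hrs) (Nat.succ_injective hkm)

lemma two_le_powSucc (p : nonPerfectPowers × ℕ) : 2 ≤ powSucc p :=
  p.1.2.1.trans (Nat.le_self_pow p.2.succ_ne_zero _)

lemma range_powSucc : Set.range powSucc = Set.Ici 2 := by
  refine Set.Subset.antisymm (Set.range_subset_iff.2 two_le_powSucc) fun n hn => ?_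
  obtain ⟨r, hr, k, rfl⟩ := exists_pow_eq hn
  exact ⟨(⟨r, hr⟩, k), rfl⟩

end nonPerfectPowers

open Complex in
lemma Complex.hasSum_cosh_div_two_sinh_sub_half {w : ℂ} (hw : 0 < w.re) :
    HasSum (fun k : ℕ => exp (-w) ^ (k + 1)) (cosh (w / 2) / (2 * sinh (w / 2)) - 1 / 2) := by
  set q := exp (-w)
  have hq : ‖q‖ < 1 := by simpa [q, norm_exp] using hw
  have hq1 : 1 - q ≠ 0 := sub_ne_zero.2 fun h => by simp [← h] at hq
  have hfactor : 2 * sinh (w / 2) = exp (w / 2) * (1 - q) := by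
    rw [two_sinh, mul_sub, mul_one, ← exp_add]
    ring_nf
  have hsinh : sinh (w / 2) ≠ 0 :=
    right_ne_zero_of_mul (hfactor ▸ mul_ne_zero (exp_ne_zero _) hq1)
  have hsum : cosh (w / 2) / (2 * sinh (w / 2)) - 1 / 2 = q * (1 - q)⁻¹ := by
    calc cosh (w / 2) / (2 * sinh (w / 2)) - 1 / 2
        = (cosh (w / 2) - sinh (w / 2)) / (2 * sinh (w / 2)) := by field_simp
      _ = q * (1 - q)⁻¹ := by
          rw [cosh_sub_sinh, hfactor, div_mul_eq_div_div, ← exp_sub, div_eq_mul_inv,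
            show -(w / 2) - w / 2 = -w by ring]
  rw [hsum]
  simpa only [pow_succ'] using (hasSum_geometric_of_norm_lt_one hq).mul_left q

lemma one_div_natCast_pow_cpow {r : ℕ} (hr : r ≠ 0) (n : ℕ) (z : ℂ) :
    1 / ((r ^ n : ℕ) : ℂ) ^ z = Complex.exp (-(z * Real.log r)) ^ n := by
  rw [Nat.cast_pow, ← Complex.natCast_cpow_natCast_mul, Complex.cpow_nat_mul,
    Complex.cpow_def_of_ne_zero (Nat.cast_ne_zero.2 hr), ← Complex.natCast_log, one_div,
    ← inv_pow, ← Complex.exp_neg, mul_comm]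

lemma hasSum_one_div_natCast_pow_succ_cpow {r : ℕ} (hr : 1 < r) {z : ℂ} (hz : 0 < z.re) :
    HasSum (fun k : ℕ => 1 / ((r ^ (k + 1) : ℕ) : ℂ) ^ z)
      (Complex.cosh (z * Real.log r / 2) / (2 * Complex.sinh (z * Real.log r / 2)) - 1 / 2) := by
  simp only [one_div_natCast_pow_cpow (Nat.ne_zero_of_lt hr)]
  refine Complex.hasSum_cosh_div_two_sinh_sub_half ?_
  rw [Complex.re_mul_ofReal]
  exact mul_pos hz (Real.log_pos (by exact_mod_cast hr))

lemma hasSum_one_div_powSucc_cpow {z : ℂ} (hz : 1 < z.re) :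
    HasSum (fun p => 1 / ((nonPerfectPowers.powSucc p : ℕ) : ℂ) ^ z) (riemannZeta z - 1) := by
  set f : ℕ → ℂ := fun n => 1 / (n : ℂ) ^ z
  have hf : HasSum f (riemannZeta z) :=
    zeta_eq_tsum_one_div_nat_cpow hz ▸ (Complex.summable_one_div_nat_cpow.2 hz).hasSum
  have hf' : HasSum (Function.update f 1 0) (riemannZeta z - 1) := by
    simpa [f, sub_eq_neg_add] using hf.update 1 0
  rw [← nonPerfectPowers.powSucc_injective.hasSum_iff] at hf'
  · refine hf'.congr_fun fun p => ?_
    have : nonPerfectPowers.powSucc p ≠ 1 := by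
      have := nonPerfectPowers.two_le_powSucc p; omega
    exact (Function.update_of_ne this 0 f).symm
  · intro n hn
    rw [nonPerfectPowers.range_powSucc, Set.mem_Ici, not_le] at hn
    interval_cases n
    · simp [f, Complex.zero_cpow (Complex.ne_zero_of_one_lt_re hz)]
    · exact Function.update_self ..

theorem riemannZeta_eq_one_add_tsum_coth
    (z : ℂ) (hz : 1 < z.re) :
    riemannZeta z = 1 + ∑' r : nonPerfectPowers,
      (Complex.cosh (z * Real.log (r : ℕ) / 2) /
        (2 * Complex.sinh (z * Real.log (r : ℕ) / 2)) - 1 / 2) := by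
  have hsum := (hasSum_one_div_powSucc_cpow hz).prod_fiberwise fun r =>
    hasSum_one_div_natCast_pow_succ_cpow r.2.1 (by linarith)
  rw [hsum.tsum_eq]
  ring
end

section
/- For every complex number z with 0 < ‖z‖ < 2π, the series ∑_{n=0}^∞ B_n · z^n / n! converges and 1/(exp(z) − 1) = (1/z) · ∑_{n=0}^∞ B_n · z^n / n!, where B_n denotes the n-th Bernoulli number; equivalently, 1/(e^z − 1) = ∑_{n=−1}^∞ B_{n+1} z^n/(n+1)!. -/
/-!
Multiplying the Bernoulli series by the series of `exp z - 1` gives `z`, because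
`(∑ Bₙ Xⁿ / n!) * (exp X - 1) = X` holds already for formal power series and the Cauchy product
of two absolutely convergent series converges to the product of their sums. Absolute
convergence for `‖z‖ < 2π` comes from `ζ(2k) = (-1)^(k+1) (2π)^(2k) B₂ₖ / (2 (2k)!)` and
`ζ(2k) ≤ ζ(2) < 2`, which give `|Bₙ| / n! ≤ 4 / (2π)ⁿ`.
-/

open Real
open scoped Nat

namespace PowerSeries

theorem tsum_coeff_mul_pow_mul_tsum {R : Type*} [NormedCommRing R] [CompleteSpace R]
    (f g : R⟦X⟧) (x : R) (hf : Summable fun n => ‖coeff n f * x ^ n‖)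
    (hg : Summable fun n => ‖coeff n g * x ^ n‖) :
    (∑' n, coeff n f * x ^ n) * (∑' n, coeff n g * x ^ n) = ∑' n, coeff n (f * g) * x ^ n := by
  rw [tsum_mul_tsum_eq_tsum_sum_antidiagonal_of_summable_norm hf hg]
  refine tsum_congr fun n => ?_
  rw [coeff_mul, Finset.sum_mul]
  refine Finset.sum_congr rfl fun kl hkl => ?_
  rw [← Finset.HasAntidiagonal.mem_antidiagonal.mp hkl, pow_add]
  ring

theorem coeff_bernoulliPowerSeries {K : Type*} [Field K] [CharZero K] (n : ℕ) :
    coeff n (bernoulliPowerSeries K) = bernoulli n / n ! := by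
  simp [bernoulliPowerSeries]

theorem hasSum_coeff_exp_sub_one_mul_pow (z : ℂ) :
    HasSum (fun n => coeff n (exp ℂ - 1) * z ^ n) (Complex.exp z - 1) := by
  rw [Complex.exp_eq_exp_ℂ]
  refine ((NormedSpace.expSeries_div_hasSum_exp z).sub (hasSum_ite_eq 0 1)).congr_fun fun n => ?_
  rcases eq_or_ne n 0 with rfl | hn <;> simp [coeff_one, div_eq_inv_mul, *]

theorem summable_norm_coeff_exp_sub_one_mul_pow (z : ℂ) :
    Summable fun n => ‖coeff n (exp ℂ - 1) * z ^ n‖ := by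
  refine .of_nonneg_of_le (fun _ => norm_nonneg _) (fun n => ?_)
    (NormedSpace.norm_expSeries_div_summable z)
  rcases eq_or_ne n 0 with rfl | hn <;> simp [coeff_one, div_eq_inv_mul, *]

end PowerSeries

theorem tsum_one_div_nat_pow_two_mul_le {k : ℕ} (hk : k ≠ 0) :
    ∑' n : ℕ, 1 / (n : ℝ) ^ (2 * k) ≤ π ^ 2 / 6 := by
  refine hasSum_le (fun n => ?_) (hasSum_zeta_nat hk).summable.hasSum hasSum_zeta_two
  rcases eq_or_ne n 0 with rfl | hn
  · simp [hk]
  · have hn1 : (1 : ℝ) ≤ n := by exact_mod_cast Nat.one_le_iff_ne_zero.mpr hn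
    gcongr
    omega

theorem abs_bernoulli_two_mul_div_factorial {k : ℕ} (hk : k ≠ 0) :
    |(bernoulli (2 * k) : ℝ)| / (2 * k)! =
      2 * (∑' n : ℕ, 1 / (n : ℝ) ^ (2 * k)) / (2 * π) ^ (2 * k) := by
  have habs := congrArg abs (hasSum_zeta_nat hk).tsum_eq
  rw [abs_of_nonneg (tsum_nonneg fun n => by positivity)] at habs
  have htwo_pow : (2 : ℝ) ^ (2 * k) = 2 * 2 ^ (2 * k - 1) := by
    rw [← pow_succ', Nat.sub_add_cancel (by omega)]
  rw [habs, mul_pow, htwo_pow]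
  simp only [abs_div, abs_mul, abs_pow, abs_neg, abs_one, one_pow, one_mul, abs_two,
    abs_of_pos pi_pos, Nat.abs_cast]
  field_simp

theorem abs_bernoulli_div_factorial_le (n : ℕ) :
    |(bernoulli n : ℝ)| / n ! ≤ 4 / (2 * π) ^ n := by
  obtain ⟨k, rfl | rfl⟩ := Nat.even_or_odd' n
  · rcases eq_or_ne k 0 with rfl | hk
    · norm_num
    rw [abs_bernoulli_two_mul_div_factorial hk]
    gcongr
    nlinarith [tsum_one_div_nat_pow_two_mul_le hk, pi_lt_d2, pi_pos]
  · rcases eq_or_ne k 0 with rfl | hk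
    · norm_num [bernoulli_one]
      rw [div_le_div_iff₀ two_pos (by positivity)]
      nlinarith [pi_le_four]
    · rw [bernoulli_eq_bernoulli'_of_ne_one (by omega),
        bernoulli'_eq_zero_of_odd (odd_two_mul_add_one k) (by omega)]
      simp only [Rat.cast_zero, abs_zero, zero_div]
      positivity

theorem summable_norm_bernoulli_mul_pow_div_factorial {z : ℂ} (hz : ‖z‖ < 2 * π) :
    Summable fun n => ‖(bernoulli n : ℂ) * z ^ n / (n ! : ℂ)‖ := by
  have hgeom : Summable fun n => 4 * (‖z‖ / (2 * π)) ^ n :=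
    (summable_geometric_of_lt_one (by positivity) ((div_lt_one (by positivity)).mpr hz)).mul_left 4
  refine .of_nonneg_of_le (fun _ => norm_nonneg _) (fun n => ?_) hgeom
  calc ‖(bernoulli n : ℂ) * z ^ n / (n ! : ℂ)‖ = |(bernoulli n : ℝ)| / n ! * ‖z‖ ^ n := by
        rw [← Complex.ofReal_ratCast, norm_div, norm_mul, norm_pow, Complex.norm_real,
          Complex.norm_natCast, Real.norm_eq_abs]
        ring
    _ ≤ 4 / (2 * π) ^ n * ‖z‖ ^ n :=
        mul_le_mul_of_nonneg_right (abs_bernoulli_div_factorial_le n) (by positivity)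
    _ = 4 * (‖z‖ / (2 * π)) ^ n := by rw [div_pow]; ring

theorem tsum_bernoulli_mul_pow_div_factorial_mul_exp_sub_one {z : ℂ} (hz : ‖z‖ < 2 * π) :
    (∑' n, (bernoulli n : ℂ) * z ^ n / n !) * (Complex.exp z - 1) = z := by
  have hcoeff (n : ℕ) :
      PowerSeries.coeff n (bernoulliPowerSeries ℂ) * z ^ n = bernoulli n * z ^ n / n ! := by
    rw [PowerSeries.coeff_bernoulliPowerSeries, div_mul_eq_mul_div]
  have hB := summable_norm_bernoulli_mul_pow_div_factorial hz
  simp_rw [← hcoeff] at hB ⊢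
  rw [← (PowerSeries.hasSum_coeff_exp_sub_one_mul_pow z).tsum_eq,
    PowerSeries.tsum_coeff_mul_pow_mul_tsum _ _ _ hB
      (PowerSeries.summable_norm_coeff_exp_sub_one_mul_pow z),
    bernoulliPowerSeries_mul_exp_sub_one]
  simp [PowerSeries.coeff_X]

theorem one_div_exp_sub_one_eq_tsum_bernoulli
    (z : ℂ) (hz : 0 < ‖z‖) (hz2 : ‖z‖ < 2 * Real.pi) :
    Summable (fun n : ℕ => (bernoulli n : ℂ) * z ^ n / (n.factorial : ℂ)) ∧
      1 / (Complex.exp z - 1) =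
        (1 / z) * ∑' n : ℕ, (bernoulli n : ℂ) * z ^ n / (n.factorial : ℂ) := by
  have hprod := tsum_bernoulli_mul_pow_div_factorial_mul_exp_sub_one hz2
  have hz0 : z ≠ 0 := norm_pos_iff.mp hz
  have hexp : Complex.exp z - 1 ≠ 0 := fun h => hz0 (by rw [← hprod, h, mul_zero])
  refine ⟨(summable_norm_bernoulli_mul_pow_div_factorial hz2).of_norm, ?_⟩
  field_simp
  linear_combination hprod.symm
end

section
/- For every complex number z with Re(z) > 1, the Dirichlet eta function satisfies ∑_{n=1}^∞ (−1)^{n−1}/n^z = 1 + ∑_{r ∈ S} (−1)^{r−1}/(r^z − 1), where S is the set of integers r ≥ 2 that are not perfect powers and both series converge absolutely. -/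
namespace EtaAux

/-- gcd of exponents in the prime factorization. -/
def expGcd (n : ℕ) : ℕ := n.factorization.support.gcd n.factorization

theorem exists_npp (n : ℕ) (hn : 2 ≤ n) :
    ∃ r ∈ nonPerfectPowers, ∃ k : ℕ, 1 ≤ k ∧ r ^ k = n := by
  induction n using Nat.strong_induction_on with
  | _ n ih =>
    by_cases h : ∃ a k : ℕ, 2 ≤ a ∧ 2 ≤ k ∧ a ^ k = n
    · obtain ⟨a, k, ha, hk, hak⟩ := h
      have halt : a < n := by
        calc a = a ^ 1 := (pow_one a).symm
        _ < a ^ k := Nat.pow_lt_pow_right (by omega) (by omega)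
        _ = n := hak
      obtain ⟨r, hr, m, hm, hrm⟩ := ih a halt ha
      exact ⟨r, hr, m * k, Nat.mul_pos hm (by omega), by rw [pow_mul, hrm, hak]⟩
    · exact ⟨n, ⟨hn, h⟩, 1, le_refl 1, pow_one n⟩

theorem expGcd_eq_one {r : ℕ} (hr : r ∈ nonPerfectPowers) : expGcd r = 1 := by
  obtain ⟨hr2, hnp⟩ := hr
  have hr0 : r ≠ 0 := by omega
  have hr1 : r ≠ 1 := by omega
  obtain ⟨p, hp, hpd⟩ := Nat.exists_prime_and_dvd hr1
  have hpsupp : p ∈ r.factorization.support := by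
    rw [Nat.support_factorization, Nat.mem_primeFactors]
    exact ⟨hp, hpd, hr0⟩
  have hdvd : ∀ q ∈ r.factorization.support, expGcd r ∣ r.factorization q :=
    fun q hq => Finset.gcd_dvd hq
  have hne : expGcd r ≠ 0 := by
    intro h0
    have := Finset.gcd_eq_zero_iff.mp h0 p hpsupp
    exact (Finsupp.mem_support_iff.mp hpsupp) this
  by_contra hgu
  have hd2 : 2 ≤ expGcd r := by omega
  set d := expGcd r with hd
  set m := r.factorization.prod fun p e => p ^ (e / d) with hm
  have hmd : m ^ d = r := by
    have h1 : m ^ d = r.factorization.prod fun p e => p ^ e := by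
      rw [hm, Finsupp.prod, Finsupp.prod, ← Finset.prod_pow]
      refine Finset.prod_congr rfl fun q hq => ?_
      rw [← pow_mul, Nat.div_mul_cancel (hdvd q hq)]
    rw [h1, Nat.factorization_prod_pow_eq_self hr0]
  have hm2 : 2 ≤ m := by
    by_contra h
    push_neg at h
    interval_cases m
    · rw [zero_pow hne] at hmd; omega
    · rw [one_pow] at hmd; omega
  exact hnp ⟨m, d, hm2, hd2, hmd⟩

theorem expGcd_pow {r k : ℕ} (hr : r ≠ 0) (hk : k ≠ 0) : expGcd (r ^ k) = k * expGcd r := by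
  unfold expGcd
  rw [Nat.factorization_pow]
  have hsupp : (k • r.factorization).support = r.factorization.support :=
    Finsupp.support_smul_eq hk
  rw [hsupp]
  have : ∀ q ∈ r.factorization.support, (k • r.factorization) q = k * r.factorization q := by
    intro q _; simp
  rw [Finset.gcd_congr rfl this, Finset.gcd_mul_left]
  simp

theorem npp_unique {r s j k : ℕ} (hr : r ∈ nonPerfectPowers) (hs : s ∈ nonPerfectPowers)
    (hj : 1 ≤ j) (hk : 1 ≤ k) (h : r ^ j = s ^ k) : r = s ∧ j = k := by
  have hr0 : r ≠ 0 := by have := hr.1; omega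
  have hs0 : s ≠ 0 := by have := hs.1; omega
  have hjk : j = k := by
    have h1 := expGcd_pow hr0 (by omega : j ≠ 0)
    have h2 := expGcd_pow hs0 (by omega : k ≠ 0)
    rw [h, h2, expGcd_eq_one hs] at h1
    rw [expGcd_eq_one hr] at h1
    omega
  subst hjk
  exact ⟨Nat.pow_left_injective (by omega : j ≠ 0) h, rfl⟩

noncomputable def powEquiv : nonPerfectPowers × {k : ℕ // 1 ≤ k} ≃ {n : ℕ // 2 ≤ n} :=
  Equiv.ofBijective
    (fun p => ⟨p.1.1 ^ p.2.1, le_trans p.1.2.1 (Nat.le_self_pow (Nat.one_le_iff_ne_zero.mp p.2.2) _)⟩)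
    (by
      constructor
      · rintro ⟨⟨r, hr⟩, ⟨j, hj⟩⟩ ⟨⟨s, hs⟩, ⟨k, hk⟩⟩ h
        simp only [Subtype.mk.injEq] at h
        obtain ⟨h1, h2⟩ := npp_unique hr hs hj hk h
        simp [h1, h2]
      · rintro ⟨n, hn⟩
        obtain ⟨r, hr, k, hk, hrk⟩ := exists_npp n hn
        exact ⟨⟨⟨r, hr⟩, ⟨k, hk⟩⟩, by simp [hrk]⟩)

theorem neg_one_pow_pred_pow {r k : ℕ} (hr : 2 ≤ r) (hk : 1 ≤ k) :
    (-1 : ℂ) ^ (r ^ k - 1) = (-1 : ℂ) ^ (r - 1) := by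
  have h1 : 1 ≤ r ^ k := le_trans (by omega) (Nat.le_self_pow (by omega) r)
  rcases Nat.even_or_odd r with he | ho
  · have hek : Even (r ^ k) := he.pow_of_ne_zero (n := k) (by omega)
    have h2 : Odd (r ^ k - 1) := Nat.Even.sub_odd h1 hek odd_one
    have h3 : Odd (r - 1) := Nat.Even.sub_odd (by omega) he odd_one
    rw [h2.neg_one_pow, h3.neg_one_pow]
  · have hok : Odd (r ^ k) := ho.pow
    have h2 : Even (r ^ k - 1) := Nat.Odd.sub_odd hok odd_one
    have h3 : Even (r - 1) := Nat.Odd.sub_odd ho odd_one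
    rw [h2.neg_one_pow, h3.neg_one_pow]


noncomputable def shiftEquiv2 : ℕ ≃ {n : ℕ // 2 ≤ n} where
  toFun n := ⟨n + 2, by omega⟩
  invFun a := a.1 - 2
  left_inv n := by simp
  right_inv a := by rcases a with ⟨v, h⟩; ext; simp; omega

noncomputable def shiftEquiv1 : ℕ ≃ {k : ℕ // 1 ≤ k} where
  toFun n := ⟨n + 1, by omega⟩
  invFun a := a.1 - 1
  left_inv n := by simp
  right_inv a := by rcases a with ⟨v, h⟩; ext; simp; omega

end EtaAux

open EtaAux

theorem dirichletEta_eq_one_add_alternating_tsum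
    (z : ℂ) (hz : 1 < z.re) :
    Summable (fun n : ℕ => ‖(-1 : ℂ) ^ n / (((n : ℕ) + 1 : ℕ) : ℂ) ^ z‖) ∧
    Summable (fun r : nonPerfectPowers =>
      ‖(-1 : ℂ) ^ ((r : ℕ) - 1) / (((r : ℕ) : ℂ) ^ z - 1)‖) ∧
    (∑' n : ℕ, (-1 : ℂ) ^ n / (((n : ℕ) + 1 : ℕ) : ℂ) ^ z) =
      1 + ∑' r : nonPerfectPowers,
        (-1 : ℂ) ^ ((r : ℕ) - 1) / (((r : ℕ) : ℂ) ^ z - 1) := by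
  have hz0 : z ≠ 0 := by
    intro h; rw [h] at hz; simp at hz; linarith
  set F : ℕ → ℂ := fun n => (-1 : ℂ) ^ (n - 1) / (n : ℂ) ^ z with hFdef
  -- norms of F
  have hFnorm : ∀ n : ℕ, ‖F n‖ = 1 / (n : ℝ) ^ z.re := by
    intro n
    rcases Nat.eq_zero_or_pos n with rfl | hn
    · simp [hFdef, Complex.zero_cpow hz0, Real.zero_rpow (by linarith : z.re ≠ 0)]
    · rw [hFdef]
      simp only [norm_div, norm_pow, norm_neg, norm_one, one_pow,
        Complex.norm_natCast_cpow_of_pos hn]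
  have hFnormSum : Summable fun n : ℕ => ‖F n‖ := by
    have := Real.summable_one_div_nat_rpow.mpr hz
    exact this.congr fun n => (hFnorm n).symm
  have hFsum : Summable F := hFnormSum.of_norm
  -- norm of (r:ℂ)^z for r ≥ 2
  have hcnorm : ∀ r : ℕ, 0 < r → ‖(r : ℂ) ^ z‖ = (r : ℝ) ^ z.re := fun r hr =>
    Complex.norm_natCast_cpow_of_pos hr z
  have hc2 : ∀ r : ℕ, 2 ≤ r → (2 : ℝ) ≤ (r : ℝ) ^ z.re := by
    intro r hr
    have h1 : (1 : ℝ) ≤ (r : ℝ) := by exact_mod_cast by omega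
    calc (2 : ℝ) ≤ (r : ℝ) := by exact_mod_cast hr
    _ = (r : ℝ) ^ (1 : ℝ) := (Real.rpow_one _).symm
    _ ≤ (r : ℝ) ^ z.re := Real.rpow_le_rpow_of_exponent_le h1 (by linarith)
  have hcne : ∀ r : ℕ, 2 ≤ r → ((r : ℂ) ^ z ≠ 0 ∧ (r : ℂ) ^ z - 1 ≠ 0) := by
    intro r hr
    have h2 : (2 : ℝ) ≤ ‖(r : ℂ) ^ z‖ := by rw [hcnorm r (by omega)]; exact hc2 r hr
    constructor
    · intro h; rw [h] at h2; simp at h2; linarith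
    · intro h
      have : (r : ℂ) ^ z = 1 := by linear_combination h
      rw [this] at h2; simp at h2
  -- first summability claim
  have hS1 : Summable (fun n : ℕ => ‖(-1 : ℂ) ^ n / (((n : ℕ) + 1 : ℕ) : ℂ) ^ z‖) := by
    have := (summable_nat_add_iff 1).mpr hFnormSum
    exact this.congr fun n => by simp [hFdef]
  -- bound for the r-series
  have hbound : ∀ r : ℕ, 2 ≤ r →
      ‖(-1 : ℂ) ^ (r - 1) / ((r : ℂ) ^ z - 1)‖ ≤ 2 * (1 / (r : ℝ) ^ z.re) := by
    intro r hr
    have h2 : (2 : ℝ) ≤ ‖(r : ℂ) ^ z‖ := by rw [hcnorm r (by omega)]; exact hc2 r hr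
    have hlow : ‖(r : ℂ) ^ z‖ / 2 ≤ ‖(r : ℂ) ^ z - 1‖ := by
      have := norm_sub_norm_le ((r : ℂ) ^ z) 1
      rw [norm_one] at this
      linarith
    rw [norm_div, norm_pow, norm_neg, norm_one, one_pow]
    rw [hcnorm r (by omega)] at hlow h2
    have hpos : (0 : ℝ) < (r : ℝ) ^ z.re := by linarith
    rw [div_le_iff₀ (by linarith : (0:ℝ) < ‖(r : ℂ) ^ z - 1‖)]
    calc (1 : ℝ) = (2 * (1 / (r : ℝ) ^ z.re)) * ((r : ℝ) ^ z.re / 2) := by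
          field_simp
    _ ≤ (2 * (1 / (r : ℝ) ^ z.re)) * ‖(r : ℂ) ^ z - 1‖ := by
          apply mul_le_mul_of_nonneg_left hlow
          positivity
  have hS2 : Summable (fun r : nonPerfectPowers =>
      ‖(-1 : ℂ) ^ ((r : ℕ) - 1) / (((r : ℕ) : ℂ) ^ z - 1)‖) := by
    have hmaj : Summable (fun r : nonPerfectPowers => 2 * (1 / ((r : ℕ) : ℝ) ^ z.re)) := by
      have h1 : Summable (fun n : ℕ => 2 * (1 / (n : ℝ) ^ z.re)) :=
        (Real.summable_one_div_nat_rpow.mpr hz).mul_left 2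
      exact h1.subtype _
    refine Summable.of_nonneg_of_le (fun r => norm_nonneg _) (fun r => ?_) hmaj
    exact hbound r r.2.1
  refine ⟨hS1, hS2, ?_⟩
  -- the identity
  have hF1 : F 1 = 1 := by simp [hFdef]
  have hgeo : ∀ r : ℕ, 2 ≤ r →
      (∑' k : {k : ℕ // 1 ≤ k}, ((((r : ℕ) : ℂ) ^ z)⁻¹) ^ (k : ℕ)) = (((r : ℕ) : ℂ) ^ z - 1)⁻¹ := by
    intro r hr
    set c := ((r : ℕ) : ℂ) ^ z with hc
    obtain ⟨hc0, hc1⟩ := hcne r hr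
    have h2 : (2 : ℝ) ≤ ‖c‖ := by rw [hc, hcnorm r (by omega)]; exact hc2 r hr
    have hw : ‖c⁻¹‖ < 1 := by
      rw [norm_inv]
      rw [inv_lt_one_iff₀]
      right; linarith
    have h1 : (∑' k : {k : ℕ // 1 ≤ k}, (c⁻¹) ^ (k : ℕ)) = ∑' n : ℕ, (c⁻¹) ^ (n + 1) :=
      (shiftEquiv1.tsum_eq fun k : {k : ℕ // 1 ≤ k} => (c⁻¹) ^ (k : ℕ)).symm
    rw [h1]
    have h3 : (∑' n : ℕ, (c⁻¹) ^ (n + 1)) = c⁻¹ * (1 - c⁻¹)⁻¹ := by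
      simp_rw [pow_succ']
      rw [tsum_mul_left, tsum_geometric_of_norm_lt_one hw]
    rw [h3, ← mul_inv]
    congr 1
    rw [mul_sub, mul_one, mul_inv_cancel₀ hc0]
  have step1 : (∑' n : ℕ, (-1 : ℂ) ^ n / (((n : ℕ) + 1 : ℕ) : ℂ) ^ z) = ∑' n : ℕ, F (n + 1) :=
    tsum_congr fun n => by simp [hFdef]
  have hFsum1 : Summable fun n : ℕ => F (n + 1) := (summable_nat_add_iff 1).mpr hFsum
  have step2 : (∑' n : ℕ, F (n + 1)) = F 1 + ∑' n : ℕ, F (n + 2) := Summable.tsum_eq_zero_add hFsum1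
  have step3 : (∑' n : ℕ, F (n + 2)) = ∑' a : {n : ℕ // 2 ≤ n}, F a :=
    shiftEquiv2.tsum_eq fun a : {n : ℕ // 2 ≤ n} => F a
  have step4 : (∑' a : {n : ℕ // 2 ≤ n}, F a)
      = ∑' p : nonPerfectPowers × {k : ℕ // 1 ≤ k}, F ((p.1 : ℕ) ^ (p.2 : ℕ)) :=
    (powEquiv.tsum_eq fun a : {n : ℕ // 2 ≤ n} => F a).symm
  have hpt : ∀ p : nonPerfectPowers × {k : ℕ // 1 ≤ k},
      F ((p.1 : ℕ) ^ (p.2 : ℕ))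
        = (-1 : ℂ) ^ ((p.1 : ℕ) - 1) * ((((p.1 : ℕ) : ℂ) ^ z)⁻¹) ^ (p.2 : ℕ) := by
    rintro ⟨⟨r, hr⟩, ⟨k, hk⟩⟩
    simp only [hFdef]
    rw [neg_one_pow_pred_pow hr.1 hk, Nat.cast_pow]
    rw [← Complex.cpow_nat_mul' (x := (r : ℂ)) (n := k)
      (by rw [Complex.natCast_arg]; simp; positivity)
      (by rw [Complex.natCast_arg]; simp [Real.pi_pos.le]) z]
    rw [Complex.cpow_nat_mul]
    rw [div_eq_mul_inv, inv_pow]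
  have hFA : Summable fun a : {n : ℕ // 2 ≤ n} => F a := hFsum.subtype _
  have hH : Summable fun p : nonPerfectPowers × {k : ℕ // 1 ≤ k} =>
      F ((p.1 : ℕ) ^ (p.2 : ℕ)) := by
    have := (Equiv.summable_iff powEquiv).mpr hFA
    exact this.congr fun p => rfl
  have step5 : (∑' p : nonPerfectPowers × {k : ℕ // 1 ≤ k}, F ((p.1 : ℕ) ^ (p.2 : ℕ)))
      = ∑' r : nonPerfectPowers, ∑' k : {k : ℕ // 1 ≤ k}, F ((r : ℕ) ^ (k : ℕ)) :=
    Summable.tsum_prod' hH fun r => hH.prod_factor r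
  have step6 : ∀ r : nonPerfectPowers,
      (∑' k : {k : ℕ // 1 ≤ k}, F ((r : ℕ) ^ (k : ℕ)))
        = (-1 : ℂ) ^ ((r : ℕ) - 1) / (((r : ℕ) : ℂ) ^ z - 1) := by
    intro r
    calc (∑' k : {k : ℕ // 1 ≤ k}, F ((r : ℕ) ^ (k : ℕ)))
        = ∑' k : {k : ℕ // 1 ≤ k},
            (-1 : ℂ) ^ ((r : ℕ) - 1) * ((((r : ℕ) : ℂ) ^ z)⁻¹) ^ (k : ℕ) :=
          tsum_congr fun k => hpt (r, k)
    _ = (-1 : ℂ) ^ ((r : ℕ) - 1)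
          * ∑' k : {k : ℕ // 1 ≤ k}, ((((r : ℕ) : ℂ) ^ z)⁻¹) ^ (k : ℕ) := tsum_mul_left
    _ = _ := by rw [hgeo (r : ℕ) r.2.1, div_eq_mul_inv]
  rw [step1, step2, hF1, step3, step4, step5]
  congr 1
  exact tsum_congr step6
end

section
/- For every complex number z with Re(z) > 1, one has (1 − 2^{1−z})·ζ(z) = 1 + ∑_{r ∈ S} (−1)^{r−1}/(r^z − 1), where S is the set of integers r ≥ 2 that are not perfect powers and the series converges absolutely. -/
open Complex

def factorizationGcd (n : ℕ) : ℕ := n.factorization.support.gcd n.factorization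

lemma factorizationGcd_dvd (n p : ℕ) : factorizationGcd n ∣ n.factorization p := by
  by_cases hp : p ∈ n.factorization.support
  · exact Finset.gcd_dvd hp
  · simp [Finsupp.notMem_support_iff.mp hp]

lemma factorizationGcd_pos {n : ℕ} (hn : 1 < n) : 0 < factorizationGcd n := by
  obtain ⟨p, hp⟩ := (Nat.nonempty_primeFactors.mpr hn).exists_mem
  rw [← Nat.support_factorization] at hp
  exact Nat.pos_of_ne_zero fun h ↦ Finsupp.mem_support_iff.mp hp (Finset.gcd_eq_zero_iff.mp h p hp)

lemma factorizationGcd_pow (r m : ℕ) : factorizationGcd (r ^ m) = m * factorizationGcd r := by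
  rcases eq_or_ne m 0 with rfl | hm
  · simp [factorizationGcd]
  have hsupp : (r ^ m).factorization.support = r.factorization.support := by
    rw [Nat.factorization_pow]
    exact Finsupp.support_smul_eq hm
  rw [factorizationGcd, factorizationGcd, hsupp, Nat.factorization_pow, Finsupp.coe_smul]
  exact Finset.gcd_mul_left.trans (by simp)

lemma exists_pow_eq_of_dvd_factorization {n k : ℕ} (hn : n ≠ 0)
    (h : ∀ p, k ∣ n.factorization p) : ∃ a, a ^ k = n := by
  refine ⟨n.factorization.prod fun p e ↦ p ^ (e / k), ?_⟩
  calc (n.factorization.prod fun p e ↦ p ^ (e / k)) ^ k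
      = n.factorization.prod fun p e ↦ p ^ e := by
        rw [Finsupp.prod, Finsupp.prod, ← Finset.prod_pow]
        exact Finset.prod_congr rfl fun p _ ↦ by rw [← pow_mul, Nat.div_mul_cancel (h p)]
    _ = n := Nat.prod_factorization_pow_eq_self hn

lemma exists_pow_factorizationGcd_eq {n : ℕ} (hn : 1 < n) :
    ∃ a, 1 < a ∧ a ^ factorizationGcd n = n := by
  obtain ⟨a, ha⟩ := exists_pow_eq_of_dvd_factorization (by omega) (factorizationGcd_dvd n)
  exact ⟨a, (Nat.one_lt_pow_iff (factorizationGcd_pos hn).ne').mp (by rwa [ha]), ha⟩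

lemma mem_nonPerfectPowers_iff {r : ℕ} (hr : 2 ≤ r) :
    r ∈ nonPerfectPowers ↔ factorizationGcd r = 1 := by
  refine ⟨fun h ↦ ?_, fun h ↦ ⟨hr, ?_⟩⟩
  · by_contra hne
    obtain ⟨a, ha, har⟩ := exists_pow_factorizationGcd_eq hr
    have := factorizationGcd_pos hr
    exact h.2 ⟨a, _, ha, by omega, har⟩
  · rintro ⟨a, k, ha, hk, rfl⟩
    rw [factorizationGcd_pow] at h
    have := factorizationGcd_pos ha
    nlinarith

lemma factorizationGcd_pow_of_mem_nonPerfectPowers {r : ℕ} (hr : r ∈ nonPerfectPowers) (m : ℕ) :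
    factorizationGcd (r ^ m) = m := by
  rw [factorizationGcd_pow, (mem_nonPerfectPowers_iff hr.1).mp hr, mul_one]

lemma eq_and_eq_of_pow_eq_pow {r s a b : ℕ} (hr : r ∈ nonPerfectPowers)
    (hs : s ∈ nonPerfectPowers) (ha : a ≠ 0) (h : r ^ a = s ^ b) : r = s ∧ a = b := by
  have hab : a = b := by
    rw [← factorizationGcd_pow_of_mem_nonPerfectPowers hr a,
      ← factorizationGcd_pow_of_mem_nonPerfectPowers hs b, h]
  subst hab
  exact ⟨Nat.pow_left_injective ha h, rfl⟩

lemma exists_mem_nonPerfectPowers_pow_eq {n : ℕ} (hn : 2 ≤ n) :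
    ∃ r ∈ nonPerfectPowers, ∃ m ≠ 0, r ^ m = n := by
  obtain ⟨r, hr, hrn⟩ := exists_pow_factorizationGcd_eq hn
  have hd := factorizationGcd_pos hn
  refine ⟨r, (mem_nonPerfectPowers_iff hr).mpr ?_, _, hd.ne', hrn⟩
  have := factorizationGcd_pow r (factorizationGcd n)
  rw [hrn] at this
  nlinarith [factorizationGcd_pos hr]

noncomputable def powSuccEquiv : (Σ _ : nonPerfectPowers, ℕ) ≃ {n : ℕ // 2 ≤ n} :=
  Equiv.ofBijective (fun p ↦ ⟨p.1 ^ (p.2 + 1), Nat.one_lt_pow p.2.succ_ne_zero p.1.2.1⟩) <| by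
    constructor
    · rintro ⟨⟨r, hr⟩, a⟩ ⟨⟨s, hs⟩, b⟩ h
      obtain ⟨rfl, hab⟩ := eq_and_eq_of_pow_eq_pow hr hs a.succ_ne_zero (Subtype.mk.inj h)
      obtain rfl := Nat.succ_injective hab
      rfl
    · rintro ⟨n, hn⟩
      obtain ⟨r, hr, m, hm, rfl⟩ := exists_mem_nonPerfectPowers_pow_eq hn
      exact ⟨⟨⟨r, hr⟩, m - 1⟩, by simp [Nat.sub_add_cancel (Nat.one_le_iff_ne_zero.mpr hm)]⟩

lemma neg_one_pow_pow_succ_sub_one {R : Type*} [Monoid R] [HasDistribNeg R] (r m : ℕ) :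
    (-1 : R) ^ (r ^ (m + 1) - 1) = (-1) ^ (r - 1) := by
  rcases r with _ | r
  · simp
  refine neg_one_pow_congr ?_
  rw [Nat.even_sub (Nat.one_le_pow _ _ r.succ_pos), Nat.even_sub r.succ_pos,
    Nat.even_pow' m.succ_ne_zero]

lemma hasSum_inv_pow_succ {K : Type*} [NormedField K] [CompleteSpace K] {u : K} (hu : 1 < ‖u‖) :
    HasSum (fun m : ℕ ↦ (u ^ (m + 1))⁻¹) (u - 1)⁻¹ := by
  have hu0 : u ≠ 0 := norm_pos_iff.mp (one_pos.trans hu)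
  have hu1 : u - 1 ≠ 0 := sub_ne_zero.mpr fun h ↦ by simp [h] at hu
  have hgeom := (hasSum_geometric_of_norm_lt_one (ξ := u⁻¹) (by
    rw [norm_inv]; exact inv_lt_one_of_one_lt₀ hu)).mul_left u⁻¹
  rw [show (u - 1)⁻¹ = u⁻¹ * (1 - u⁻¹)⁻¹ by field_simp]
  exact hgeom.congr_fun fun m ↦ by rw [pow_succ', mul_inv, inv_pow]

lemma one_lt_norm_natCast_cpow {r : ℕ} (hr : 1 < r) {z : ℂ} (hz : 0 < z.re) :
    1 < ‖(r : ℂ) ^ z‖ := by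
  rw [norm_natCast_cpow_of_pos (by omega)]
  exact Real.one_lt_rpow (by exact_mod_cast hr) hz

noncomputable def dirichletEtaTerm (z : ℂ) (n : ℕ) : ℂ := (-1) ^ (n - 1) / (n : ℂ) ^ z

lemma hasSum_one_div_nat_cpow {z : ℂ} (hz : 1 < z.re) :
    HasSum (fun n : ℕ ↦ 1 / (n : ℂ) ^ z) (riemannZeta z) :=
  zeta_eq_tsum_one_div_nat_cpow hz ▸ (summable_one_div_nat_cpow.mpr hz).hasSum

lemma hasSum_one_div_two_mul_nat_cpow {z : ℂ} (hz : 1 < z.re) :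
    HasSum (fun k : ℕ ↦ 1 / ((2 * k : ℕ) : ℂ) ^ z) ((2 : ℂ) ^ (-z) * riemannZeta z) := by
  refine ((hasSum_one_div_nat_cpow hz).mul_left (2 ^ (-z))).congr_fun fun k ↦ ?_
  rw [Nat.cast_mul, natCast_mul_natCast_cpow, cpow_neg, Nat.cast_ofNat]
  field_simp

lemma hasSum_one_div_two_mul_add_one_nat_cpow {z : ℂ} (hz : 1 < z.re) :
    HasSum (fun k : ℕ ↦ 1 / ((2 * k + 1 : ℕ) : ℂ) ^ z) ((1 - (2 : ℂ) ^ (-z)) * riemannZeta z) := by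
  have hodd : Summable fun k : ℕ ↦ 1 / ((2 * k + 1 : ℕ) : ℂ) ^ z :=
    (hasSum_one_div_nat_cpow hz).summable.comp_injective fun a b h ↦ by simpa using h
  have hsum := HasSum.even_add_odd (f := fun n : ℕ ↦ 1 / (n : ℂ) ^ z)
    (hasSum_one_div_two_mul_nat_cpow hz) hodd.hasSum
  have hζ := (hasSum_one_div_nat_cpow hz).unique hsum
  rw [show (1 - (2 : ℂ) ^ (-z)) * riemannZeta z = ∑' k : ℕ, 1 / ((2 * k + 1 : ℕ) : ℂ) ^ z by
    linear_combination hζ]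
  exact hodd.hasSum

lemma dirichletEtaTerm_two_mul {z : ℂ} (hz : z ≠ 0) (k : ℕ) :
    dirichletEtaTerm z (2 * k) = -(1 / ((2 * k : ℕ) : ℂ) ^ z) := by
  rcases k.eq_zero_or_pos with rfl | hk
  · simp [dirichletEtaTerm, zero_cpow hz]
  rw [dirichletEtaTerm, (Nat.Even.sub_odd (by omega) (even_two_mul k) odd_one).neg_one_pow,
    neg_div]

lemma dirichletEtaTerm_two_mul_add_one (z : ℂ) (k : ℕ) :
    dirichletEtaTerm z (2 * k + 1) = 1 / ((2 * k + 1 : ℕ) : ℂ) ^ z := by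
  rw [dirichletEtaTerm, Nat.add_sub_cancel, (even_two_mul k).neg_one_pow]

lemma hasSum_dirichletEtaTerm {z : ℂ} (hz : 1 < z.re) :
    HasSum (dirichletEtaTerm z) ((1 - (2 : ℂ) ^ (1 - z)) * riemannZeta z) := by
  have hz0 : z ≠ 0 := ne_zero_of_one_lt_re hz
  have heven := (hasSum_one_div_two_mul_nat_cpow hz).neg
  have hodd := hasSum_one_div_two_mul_add_one_nat_cpow hz
  simp_rw [← dirichletEtaTerm_two_mul hz0] at heven
  simp_rw [← dirichletEtaTerm_two_mul_add_one] at hodd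
  have htwo : (2 : ℂ) ^ (1 - z) = 2 * 2 ^ (-z) := by
    rw [sub_eq_add_neg, cpow_add _ _ two_ne_zero, cpow_one]
  rw [htwo, show (1 - 2 * 2 ^ (-z)) * riemannZeta z
    = -((2 : ℂ) ^ (-z) * riemannZeta z) + (1 - 2 ^ (-z)) * riemannZeta z by ring]
  exact HasSum.even_add_odd (f := dirichletEtaTerm z) heven hodd

lemma hasSum_dirichletEtaTerm_two_le {z : ℂ} (hz : 1 < z.re) :
    HasSum (fun n : {n : ℕ // 2 ≤ n} ↦ dirichletEtaTerm z n)
      ((1 - (2 : ℂ) ^ (1 - z)) * riemannZeta z - 1) := by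
  have hhead : ∑ n ∈ Finset.range 2, dirichletEtaTerm z n = 1 := by
    simp [Finset.sum_range_succ, dirichletEtaTerm, zero_cpow (ne_zero_of_one_lt_re hz)]
  have hcompl : HasSum (fun n : {n : ℕ // n ∉ Finset.range 2} ↦ dirichletEtaTerm z n)
      ((1 - (2 : ℂ) ^ (1 - z)) * riemannZeta z - 1) := by
    rw [Finset.hasSum_compl_iff, hhead, sub_add_cancel]
    exact hasSum_dirichletEtaTerm hz
  let e : {n : ℕ // 2 ≤ n} ≃ {n : ℕ // n ∉ Finset.range 2} :=
    .subtypeEquivRight fun n ↦ by rw [Finset.mem_range, not_lt]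
  exact e.hasSum_iff.mpr hcompl

lemma dirichletEtaTerm_pow_succ (z : ℂ) (r m : ℕ) :
    dirichletEtaTerm z (r ^ (m + 1)) = (-1) ^ (r - 1) * (((r : ℂ) ^ z) ^ (m + 1))⁻¹ := by
  rw [dirichletEtaTerm, neg_one_pow_pow_succ_sub_one, Nat.cast_pow,
    ← natCast_cpow_natCast_mul, cpow_nat_mul, div_eq_mul_inv]

lemma hasSum_dirichletEtaTerm_pow_succ {r : ℕ} (hr : 1 < r) {z : ℂ} (hz : 0 < z.re) :
    HasSum (fun m : ℕ ↦ dirichletEtaTerm z (r ^ (m + 1))) ((-1) ^ (r - 1) / ((r : ℂ) ^ z - 1)) := by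
  simp_rw [dirichletEtaTerm_pow_succ, div_eq_mul_inv]
  exact (hasSum_inv_pow_succ (one_lt_norm_natCast_cpow hr hz)).mul_left _

theorem one_sub_two_pow_mul_zeta_eq_alternating_tsum
    (z : ℂ) (hz : 1 < z.re) :
    Summable (fun r : nonPerfectPowers =>
      ‖(-1 : ℂ) ^ ((r : ℕ) - 1) / (((r : ℕ) : ℂ) ^ z - 1)‖) ∧
    (1 - (2 : ℂ) ^ (1 - z)) * riemannZeta z =
      1 + ∑' r : nonPerfectPowers,
        (-1 : ℂ) ^ ((r : ℕ) - 1) / (((r : ℕ) : ℂ) ^ z - 1) := by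
  have hgrouped := (powSuccEquiv.hasSum_iff.mpr (hasSum_dirichletEtaTerm_two_le hz)).sigma
    fun r ↦ hasSum_dirichletEtaTerm_pow_succ r.2.1 (one_pos.trans hz)
  refine ⟨summable_norm_iff.mpr hgrouped.summable, ?_⟩
  rw [hgrouped.tsum_eq]
  ring
end

section
/- There exists a real number t with 3.5 < t < 3.51 such that 1 + 1/(2^{it} − 1) + 1/(3^{it} − 1) = 0; in particular, the function z ↦ 1 + 1/(2^z − 1) + 1/(3^z − 1) has a purely imaginary zero (numerically z ≈ ±3.50671·i). -/
open Complex in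
theorem exists_imaginary_zero_two_three :
    ∃ t : ℝ, 3.5 < t ∧ t < 3.51 ∧
      1 + 1 / ((2 : ℂ) ^ ((t : ℂ) * I) - 1) + 1 / ((3 : ℂ) ^ ((t : ℂ) * I) - 1) = 0 := by
  have hl6 : Real.log 6 = Real.log 2 + Real.log 3 := by
    rw [show (6:ℝ) = 2*3 by norm_num, Real.log_mul (by norm_num) (by norm_num)]
  have hl6pos : (0:ℝ) < Real.log 6 := Real.log_pos (by norm_num)
  have hl2pos : (0:ℝ) < Real.log 2 := Real.log_pos (by norm_num)
  have hl3pos : (0:ℝ) < Real.log 3 := Real.log_pos (by norm_num)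
  have hexp52 : (6:ℝ)^(29:ℕ) < Real.exp 52 :=
    calc (6:ℝ)^(29:ℕ) < 2.7182818283 ^ (52:ℕ) := by norm_num
      _ < Real.exp 1 ^ (52:ℕ) := by
          gcongr
          exact Real.exp_one_gt_d9
      _ = Real.exp 52 := by rw [← Real.exp_nat_mul]; norm_num
  have hexp43 : Real.exp 43 < (6:ℝ)^(24:ℕ) :=
    calc Real.exp (43:ℝ) = Real.exp 1 ^ (43:ℕ) := by
          rw [← Real.exp_nat_mul]; norm_num
      _ < 2.7182818286 ^ (43:ℕ) := by
          gcongr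
          exact Real.exp_one_lt_d9
      _ < (6:ℝ)^(24:ℕ) := by norm_num
  have hlog6_lt : Real.log 6 < 52/29 := by
    have h1 : Real.log ((6:ℝ)^(29:ℕ)) < Real.log (Real.exp 52) :=
      Real.log_lt_log (by positivity) hexp52
    rw [Real.log_pow, Real.log_exp] at h1
    push_cast at h1
    linarith
  have hlog6_gt : (43:ℝ)/24 < Real.log 6 := by
    have h1 : Real.log (Real.exp 43) < Real.log ((6:ℝ)^(24:ℕ)) :=
      Real.log_lt_log (by positivity) hexp43
    rw [Real.log_pow, Real.log_exp] at h1
    push_cast at h1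
    linarith
  have hpi_gt := Real.pi_gt_d6
  have hpi_lt := Real.pi_lt_d6
  refine ⟨2 * Real.pi / Real.log 6, ?_, ?_, ?_⟩
  · rw [lt_div_iff₀ hl6pos]; nlinarith
  · rw [div_lt_iff₀ hl6pos]; nlinarith
  set t : ℝ := 2 * Real.pi / Real.log 6 with ht
  have htpos : 0 < t := by positivity
  have hkey : t * Real.log 6 = 2 * Real.pi := div_mul_cancel₀ _ hl6pos.ne'
  set a : ℝ := t * Real.log 2 with ha
  set b : ℝ := t * Real.log 3 with hb
  have hab : a + b = 2 * Real.pi := by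
    rw [ha, hb, ← mul_add, ← hl6, hkey]
  have hapos : 0 < a := by positivity
  have hbpos : 0 < b := by positivity
  have halt : a < 2 * Real.pi := by linarith
  have hblt : b < 2 * Real.pi := by linarith
  have h2 : (2 : ℂ) ^ ((t : ℂ) * I) = Complex.exp ((a : ℂ) * I) := by
    rw [show (2:ℂ) = ((2:ℝ):ℂ) by norm_num,
      Complex.cpow_def_of_ne_zero (by norm_num),
      ← Complex.ofReal_log (by norm_num : (0:ℝ) ≤ 2)]
    rw [ha]
    congr 1
    push_cast
    ring
  have h3 : (3 : ℂ) ^ ((t : ℂ) * I) = Complex.exp ((b : ℂ) * I) := by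
    rw [show (3:ℂ) = ((3:ℝ):ℂ) by norm_num,
      Complex.cpow_def_of_ne_zero (by norm_num),
      ← Complex.ofReal_log (by norm_num : (0:ℝ) ≤ 3)]
    rw [hb]
    congr 1
    push_cast
    ring
  set u : ℂ := Complex.exp ((a : ℂ) * I) with hu
  set v : ℂ := Complex.exp ((b : ℂ) * I) with hv
  have huv : u * v = 1 := by
    rw [hu, hv, ← Complex.exp_add, show (a:ℂ)*I + (b:ℂ)*I = ((a+b:ℝ):ℂ)*I by push_cast; ring,
      hab]
    push_cast
    rw [show ((2:ℂ)*(Real.pi:ℂ))*I = 2*(Real.pi:ℂ)*I by ring]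
    exact Complex.exp_two_pi_mul_I
  have hne : ∀ c : ℝ, 0 < c → c < 2 * Real.pi → Complex.exp ((c:ℂ)*I) ≠ 1 := by
    intro c hc1 hc2 hcontra
    rw [Complex.exp_eq_one_iff] at hcontra
    obtain ⟨n, hn⟩ := hcontra
    have hc : c = n * (2 * Real.pi) := by
      have him := congrArg Complex.im hn
      push_cast at him
      simpa using him
    have hpi : 0 < Real.pi := Real.pi_pos
    have hn0 : (0:ℝ) < (n:ℝ) := by nlinarith
    have hn0' : (0:ℤ) < n := by exact_mod_cast hn0
    have hn1 : (1:ℝ) ≤ (n:ℝ) := by exact_mod_cast hn0'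
    nlinarith
  have hu1 : u ≠ 1 := hne a hapos halt
  have hv1 : v ≠ 1 := hne b hbpos hblt
  rw [h2, h3]
  have hu1' : u - 1 ≠ 0 := sub_ne_zero.mpr hu1
  have hv1' : v - 1 ≠ 0 := sub_ne_zero.mpr hv1
  field_simp
  linear_combination huv
end

section
/- There exists a real number t with 0.71 < t < 0.72 such that 1/2 − 1/(2^{it} − 1) + 1/(3^{it} − 1) + 1/(5^{it} − 1) = 0; in particular, the function z ↦ 1/2 − 1/(2^z − 1) + 1/(3^z − 1) + 1/(5^z − 1) has a purely imaginary zero (numerically z ≈ ±0.719409·i). -/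
/-!
For real `θ` with `sin θ ≠ 0` one has `1 / (exp (2iθ) - 1) = -(1 + i cot θ) / 2`. Writing
`a ^ (it) = exp (2i θ_a)` with `θ_a = t log a / 2`, the constant parts cancel and the
expression becomes `(i / 2) (cot θ₂ - cot θ₃ - cot θ₅)`. This real function of `t` is
continuous on `(0, 1]` and changes sign between `0.71` and `0.72`, which is checked with the
alternating Taylor bounds for `sin` and `cos` and rational bounds for `log 2`, `log 3`, `log 5`.
-/

open Real Finset Filter Topology
open scoped Nat

namespace Real

noncomputable def sinTaylor (n : ℕ) (x : ℝ) : ℝ :=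
  ∑ i ∈ range n, (-1) ^ i * (x ^ (2 * i + 1) / (2 * i + 1)!)

noncomputable def cosTaylor (n : ℕ) (x : ℝ) : ℝ :=
  ∑ i ∈ range n, (-1) ^ i * (x ^ (2 * i) / (2 * i)!)

lemma tendsto_sinTaylor (x : ℝ) : Tendsto (sinTaylor · x) atTop (𝓝 (sin x)) := by
  simpa only [sinTaylor, mul_div_assoc] using (hasSum_sin x).tendsto_sum_nat

lemma tendsto_cosTaylor (x : ℝ) : Tendsto (cosTaylor · x) atTop (𝓝 (cos x)) := by
  simpa only [cosTaylor, mul_div_assoc] using (hasSum_cos x).tendsto_sum_nat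

lemma antitone_sinTaylor_terms {x : ℝ} (hx0 : 0 ≤ x) (hx1 : x ≤ 1) :
    Antitone fun i : ℕ ↦ x ^ (2 * i + 1) / (2 * i + 1)! :=
  antitone_nat_of_succ_le fun _ ↦ div_le_div₀ (by positivity)
    (pow_le_pow_of_le_one hx0 hx1 (by omega)) (by positivity)
    (Nat.cast_le.mpr (Nat.factorial_le (by omega)))

lemma antitone_cosTaylor_terms {x : ℝ} (hx : |x| ≤ 1) :
    Antitone fun i : ℕ ↦ x ^ (2 * i) / (2 * i)! := by
  refine antitone_nat_of_succ_le fun i ↦ ?_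
  simp only [pow_mul]
  exact div_le_div₀ (by positivity)
    (pow_le_pow_of_le_one (sq_nonneg x) ((sq_le_one_iff_abs_le_one x).mpr hx) (by omega))
    (by positivity) (Nat.cast_le.mpr (Nat.factorial_le (by omega)))

lemma sinTaylor_even_le_sin {x : ℝ} (hx0 : 0 ≤ x) (hx1 : x ≤ 1) (k : ℕ) :
    sinTaylor (2 * k) x ≤ sin x :=
  (antitone_sinTaylor_terms hx0 hx1).alternating_series_le_tendsto (tendsto_sinTaylor x) k

lemma sin_le_sinTaylor_odd {x : ℝ} (hx0 : 0 ≤ x) (hx1 : x ≤ 1) (k : ℕ) :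
    sin x ≤ sinTaylor (2 * k + 1) x :=
  (antitone_sinTaylor_terms hx0 hx1).tendsto_le_alternating_series (tendsto_sinTaylor x) k

lemma cosTaylor_even_le_cos {x : ℝ} (hx : |x| ≤ 1) (k : ℕ) :
    cosTaylor (2 * k) x ≤ cos x :=
  (antitone_cosTaylor_terms hx).alternating_series_le_tendsto (tendsto_cosTaylor x) k

lemma cos_le_cosTaylor_odd {x : ℝ} (hx : |x| ≤ 1) (k : ℕ) :
    cos x ≤ cosTaylor (2 * k + 1) x :=
  (antitone_cosTaylor_terms hx).tendsto_le_alternating_series (tendsto_cosTaylor x) k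

lemma continuousAt_cot {x : ℝ} (hx : sin x ≠ 0) : ContinuousAt cot x := by
  rw [show cot = fun x ↦ cos x / sin x from funext cot_eq_cos_div_sin]
  exact continuous_cos.continuousAt.div continuous_sin.continuousAt hx

lemma cot_le_cot {a b : ℝ} (ha : 0 < a) (hab : a ≤ b) (hb : b < π) : cot b ≤ cot a := by
  have hsa : 0 < sin a := sin_pos_of_pos_of_lt_pi ha (hab.trans_lt hb)
  have hsb : 0 < sin b := sin_pos_of_pos_of_lt_pi (ha.trans_le hab) hb
  have hsba : 0 ≤ sin (b - a) := sin_nonneg_of_nonneg_of_le_pi (by linarith) (by linarith)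
  rw [sin_sub] at hsba
  rw [cot_eq_cos_div_sin, cot_eq_cos_div_sin, div_le_div_iff₀ hsb hsa]
  linarith

lemma cot_le_cosTaylor_div_sinTaylor {x : ℝ} (hx0 : 0 ≤ x) (hx1 : x ≤ 1) (k : ℕ)
    (hs : 0 < sinTaylor (2 * k) x) :
    cot x ≤ cosTaylor (2 * k + 1) x / sinTaylor (2 * k) x := by
  have hx : |x| ≤ 1 := abs_le.mpr ⟨by linarith, hx1⟩
  have hπ := pi_gt_three
  have hc : 0 ≤ cos x := cos_nonneg_of_mem_Icc ⟨by linarith, by linarith⟩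
  rw [cot_eq_cos_div_sin]
  exact div_le_div₀ (hc.trans (cos_le_cosTaylor_odd hx k)) (cos_le_cosTaylor_odd hx k) hs
    (sinTaylor_even_le_sin hx0 hx1 k)

lemma cosTaylor_div_sinTaylor_le_cot {x : ℝ} (hx0 : 0 < x) (hx1 : x ≤ 1) (k : ℕ) :
    cosTaylor (2 * k) x / sinTaylor (2 * k + 1) x ≤ cot x := by
  have hx : |x| ≤ 1 := abs_le.mpr ⟨by linarith, hx1⟩
  have hπ := pi_gt_three
  have hc : 0 ≤ cos x := cos_nonneg_of_mem_Icc ⟨by linarith, by linarith⟩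
  rw [cot_eq_cos_div_sin]
  exact div_le_div₀ hc (cosTaylor_even_le_cos hx k)
    (sin_pos_of_pos_of_lt_pi hx0 (by linarith)) (sin_le_sinTaylor_odd hx0.le hx1 k)

lemma log_three_bounds : 1.098612 < log 3 ∧ log 3 < 1.098613 := by
  have h := abs_log_sub_add_sum_range_le (x := 1 / 3) (by norm_num [abs_of_pos]) 14
  rw [show (1 : ℝ) - 1 / 3 = 2 / 3 by norm_num, log_div (by norm_num) (by norm_num), abs_le] at h
  norm_num [sum_range_succ, abs_of_pos] at h
  constructor <;> linarith [log_two_gt_d9, log_two_lt_d9]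

lemma log_five_bounds : 1.609437 < log 5 ∧ log 5 < 1.609438 := by
  have h := abs_log_sub_add_sum_range_le (x := 1 / 5) (by norm_num [abs_of_pos]) 10
  rw [show (1 : ℝ) - 1 / 5 = 2 ^ 2 / 5 by norm_num, log_div (by norm_num) (by norm_num),
    log_pow, abs_le] at h
  norm_num [sum_range_succ, abs_of_pos] at h
  constructor <;> linarith [log_two_gt_d9, log_two_lt_d9]

end Real

namespace Complex

lemma exp_two_mul_I_mul_ne_one {z : ℂ} (hz : sin z ≠ 0) : exp (2 * I * z) ≠ 1 := by
  rw [Ne, exp_eq_one_iff]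
  rintro ⟨n, hn⟩
  have hzn : z = n * π := by
    apply mul_left_cancel₀ (show 2 * I ≠ 0 by simp)
    linear_combination hn
  exact hz (hzn ▸ sin_int_mul_pi n)

lemma one_div_exp_two_mul_I_mul_sub_one {z : ℂ} (hz : sin z ≠ 0) :
    1 / (exp (2 * I * z) - 1) = -(1 + I * cot z) / 2 := by
  have h₁ : exp (2 * I * z) - 1 ≠ 0 := sub_ne_zero.mpr (exp_two_mul_I_mul_ne_one hz)
  have h₂ : 1 - exp (2 * I * z) ≠ 0 := sub_ne_zero.mpr (exp_two_mul_I_mul_ne_one hz).symm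
  rw [cot_eq_exp_ratio]
  field_simp
  ring

lemma one_div_ofReal_cpow_mul_I_sub_one {a : ℝ} (ha : 0 < a) {t : ℝ}
    (ht : Real.sin (t * Real.log a / 2) ≠ 0) :
    1 / ((a : ℂ) ^ ((t : ℂ) * I) - 1) = -(1 + I * Real.cot (t * Real.log a / 2)) / 2 := by
  have hcpow : (a : ℂ) ^ ((t : ℂ) * I) = exp (2 * I * ↑(t * Real.log a / 2)) := by
    rw [cpow_def_of_ne_zero (ofReal_ne_zero.mpr ha.ne'), ← ofReal_log ha.le]
    push_cast
    ring_nf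
  rw [hcpow, one_div_exp_two_mul_I_mul_sub_one (mod_cast ht), ofReal_cot]

end Complex

noncomputable def cotCombination (t : ℝ) : ℝ :=
  cot (t * log 2 / 2) - cot (t * log 3 / 2) - cot (t * log 5 / 2)

lemma sin_mul_log_div_two_pos {a t : ℝ} (ha : 1 < a) (ha5 : a ≤ 5) (ht : t ∈ Set.Ioc 0 1) :
    0 < sin (t * log a / 2) := by
  have hla : log a ≤ log 5 := log_le_log (by linarith) ha5
  have := log_pos ha
  refine sin_pos_of_pos_of_lt_pi (by have := ht.1; positivity) ?_
  nlinarith [ht.2, log_five_bounds.2, pi_gt_three]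

lemma continuousOn_cotCombination : ContinuousOn cotCombination (Set.Ioc 0 1) := by
  have hcot {a : ℝ} (ha : 1 < a) (ha5 : a ≤ 5) :
      ContinuousOn (fun t ↦ cot (t * log a / 2)) (Set.Ioc 0 1) := fun t ht ↦
    ((continuousAt_cot (sin_mul_log_div_two_pos ha ha5 ht).ne').comp
      (f := fun t ↦ t * log a / 2) (by fun_prop)).continuousWithinAt
  exact ((hcot one_lt_two (by norm_num)).sub (hcot (by norm_num) (by norm_num))).sub
    (hcot (by norm_num) le_rfl)

lemma cot_mul_log_div_two_le_taylor {a t l : ℝ} (ht : 0 < t) (hl : 0 < l) (hla : l ≤ log a)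
    (hta : t * log a < 2 * π) (htl : t * l ≤ 2) (k : ℕ)
    (hs : 0 < sinTaylor (2 * k) (t * l / 2)) :
    cot (t * log a / 2) ≤ cosTaylor (2 * k + 1) (t * l / 2) / sinTaylor (2 * k) (t * l / 2) :=
  (cot_le_cot (a := t * l / 2) (by positivity) (by gcongr) (by linarith)).trans
    (cot_le_cosTaylor_div_sinTaylor (by positivity) (by linarith) k hs)

lemma taylor_le_cot_mul_log_div_two {a t u : ℝ} (ht : 0 < t) (ha : 0 < log a)
    (hau : log a ≤ u) (htu : t * u ≤ 2) (k : ℕ) :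
    cosTaylor (2 * k) (t * u / 2) / sinTaylor (2 * k + 1) (t * u / 2) ≤ cot (t * log a / 2) :=
  (cosTaylor_div_sinTaylor_le_cot (by have := ha.trans_le hau; positivity) (by linarith) k).trans
    (cot_le_cot (by positivity) (by gcongr) (by nlinarith [pi_gt_three]))

lemma cotCombination_neg : cotCombination 0.71 < 0 := by
  have h₂ := cot_mul_log_div_two_le_taylor (t := 0.71) (by norm_num) (by norm_num)
    log_two_gt_d9.le (by nlinarith [log_two_lt_d9, pi_gt_three]) (by norm_num) 2
    (by norm_num [sinTaylor, sum_range_succ, Nat.factorial])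
  have h₃ := taylor_le_cot_mul_log_div_two (t := 0.71) (by norm_num) (log_pos (by norm_num))
    log_three_bounds.2.le (by norm_num) 2
  have h₅ := taylor_le_cot_mul_log_div_two (t := 0.71) (by norm_num) (log_pos (by norm_num))
    log_five_bounds.2.le (by norm_num) 2
  norm_num [sinTaylor, cosTaylor, sum_range_succ, Nat.factorial] at h₂ h₃ h₅
  unfold cotCombination
  linarith

-- `cotCombination 0.72 ≈ 4 · 10⁻⁴`, so the logarithms must be known to within about `10⁻⁵`.
lemma cotCombination_pos : 0 < cotCombination 0.72 := by
  have h₂ := taylor_le_cot_mul_log_div_two (t := 0.72) (by norm_num) (log_pos (by norm_num))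
    log_two_lt_d9.le (by norm_num) 2
  have h₃ := cot_mul_log_div_two_le_taylor (t := 0.72) (by norm_num) (by norm_num)
    log_three_bounds.1.le (by nlinarith [log_three_bounds.2, pi_gt_three]) (by norm_num) 2
    (by norm_num [sinTaylor, sum_range_succ, Nat.factorial])
  have h₅ := cot_mul_log_div_two_le_taylor (t := 0.72) (by norm_num) (by norm_num)
    log_five_bounds.1.le (by nlinarith [log_five_bounds.2, pi_gt_three]) (by norm_num) 2
    (by norm_num [sinTaylor, sum_range_succ, Nat.factorial])
  norm_num [sinTaylor, cosTaylor, sum_range_succ, Nat.factorial] at h₂ h₃ h₅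
  unfold cotCombination
  linarith

open Complex in
theorem exists_imaginary_zero_half_two_three_five :
    ∃ t : ℝ, 0.71 < t ∧ t < 0.72 ∧
      1 / 2 - 1 / ((2 : ℂ) ^ ((t : ℂ) * I) - 1) + 1 / ((3 : ℂ) ^ ((t : ℂ) * I) - 1)
        + 1 / ((5 : ℂ) ^ ((t : ℂ) * I) - 1) = 0 := by
  obtain ⟨t, ⟨ht₁, ht₂⟩, ht⟩ := intermediate_value_Ioo (by norm_num)
    (continuousOn_cotCombination.mono fun s hs ↦ ⟨by linarith [hs.1], by linarith [hs.2]⟩)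
    ⟨cotCombination_neg, cotCombination_pos⟩
  have key {a : ℝ} (ha : 1 < a) (ha5 : a ≤ 5) :=
    one_div_ofReal_cpow_mul_I_sub_one (by linarith) (t := t)
      (sin_mul_log_div_two_pos ha ha5 ⟨by linarith, by linarith⟩).ne'
  have h₂ := key one_lt_two (by norm_num)
  have h₃ := key (a := 3) (by norm_num) (by norm_num)
  have h₅ := key (a := 5) (by norm_num) le_rfl
  simp only [ofReal_ofNat] at h₂ h₃ h₅
  have hG : ((cotCombination t : ℝ) : ℂ) = 0 := by rw [ht, ofReal_zero]
  simp only [cotCombination, ofReal_sub] at hG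
  refine ⟨t, ht₁, ht₂, ?_⟩
  rw [h₂, h₃, h₅]
  linear_combination (I / 2) * hG
end

section
/- There exists a complex number z with 0.44 < Re(z) < 0.45 and 2.81 < Im(z) < 2.82 such that 1 + 1/(2^z − 1) + 1/(3^z − 1) + 1/(5^z − 1) = 0 (numerically z ≈ 0.445959 + 2.81436·i). -/
/-!
Clearing denominators (and using `30 ^ z = 2 ^ z * 3 ^ z * 5 ^ z`), the equation says `F z = 0`
for `F z = 30 ^ z - 2 ^ z - 3 ^ z - 5 ^ z + 2`. At `c₀ = 0.446 + 2.8144 i` one certifies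
`‖F c₀‖ ≤ 0.002` and `‖F' c₀‖ ≥ 12.5`, while `‖F''‖ ≤ 400` wherever `re z ≤ 1`. On the circle of
radius `r = 10⁻³` about `c₀` this gives `‖F z - F c₀‖ ≥ (‖F' c₀‖ - 400 r) r > 2 ‖F c₀‖`, and the
open mapping argument puts a zero of `F` inside the circle.

The values `p ^ c₀ = exp (c₀ log p)` are certified by evaluating a Taylor polynomial of `exp` at
`ℓ c₀`, with a decimal `ℓ` close to `log p`; the logarithms of `3 = 4 (1 - 1/4)` and
`5 = 4 (1 + 1/4)` come from the Mercator series and Mathlib's bound on `log 2`.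
-/

open Complex Metric Filter Topology Finset

theorem norm_sub_sub_smul_le_of_norm_deriv2_le {𝕜 E : Type*} [RCLike 𝕜] [NormedAddCommGroup E]
    [NormedSpace 𝕜 E] {f f' f'' : 𝕜 → E} {c z : 𝕜} {M : ℝ}
    (hf : ∀ w ∈ closedBall c ‖z - c‖, HasDerivAt f (f' w) w)
    (hf' : ∀ w ∈ closedBall c ‖z - c‖, HasDerivAt f' (f'' w) w)
    (hf'' : ∀ w ∈ closedBall c ‖z - c‖, ‖f'' w‖ ≤ M) :
    ‖f z - f c - (z - c) • f' c‖ ≤ M * ‖z - c‖ ^ 2 := by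
  set ρ := ‖z - c‖
  have hc : c ∈ closedBall c ρ := mem_closedBall_self (norm_nonneg _)
  have hz : z ∈ closedBall c ρ := by rw [mem_closedBall, dist_eq_norm]
  have hM : 0 ≤ M := (norm_nonneg _).trans (hf'' c hc)
  have hlip : ∀ w ∈ closedBall c ρ, ‖f' w - f' c‖ ≤ M * ρ := fun w hw =>
    ((convex_closedBall c ρ).norm_image_sub_le_of_norm_hasDerivWithin_le
      (fun v hv => (hf' v hv).hasDerivWithinAt) hf'' hc hw).trans
      (by gcongr; rwa [mem_closedBall, dist_eq_norm] at hw)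
  have hg : ∀ w ∈ closedBall c ρ, HasDerivWithinAt (fun w => f w - (w - c) • f' c)
      (f' w - f' c) (closedBall c ρ) w := fun w hw =>
    ((hf w hw).sub (((hasDerivAt_id w).sub_const c).smul_const (f' c))).hasDerivWithinAt
      |>.congr_deriv (by simp)
  calc ‖f z - f c - (z - c) • f' c‖
      = ‖(f z - (z - c) • f' c) - (f c - (c - c) • f' c)‖ := by
        rw [sub_self, zero_smul]; abel_nf
    _ ≤ M * ρ * ‖z - c‖ :=
      (convex_closedBall c ρ).norm_image_sub_le_of_norm_hasDerivWithin_le hg hlip hc hz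
    _ = M * ρ ^ 2 := by ring

theorem exists_mem_closedBall_eq_zero_of_deriv_bounds {f f' f'' : ℂ → ℂ} {c : ℂ} {r M : ℝ}
    (hr : 0 < r) (hf : ∀ z ∈ closedBall c r, HasDerivAt f (f' z) z)
    (hf' : ∀ z ∈ closedBall c r, HasDerivAt f' (f'' z) z)
    (hf'' : ∀ z ∈ closedBall c r, ‖f'' z‖ ≤ M) (h : 2 * ‖f c‖ < (‖f' c‖ - M * r) * r) :
    ∃ z ∈ closedBall c r, f z = 0 := by
  have hc : c ∈ closedBall c r := mem_closedBall_self hr.le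
  have hM : 0 ≤ M := (norm_nonneg _).trans (hf'' c hc)
  have hsphere : ∀ z ∈ sphere c r, (‖f' c‖ - M * r) * r ≤ ‖f z - f c‖ := by
    intro z hz
    rw [mem_sphere_iff_norm] at hz
    have hsub : closedBall c ‖z - c‖ ⊆ closedBall c r := closedBall_subset_closedBall hz.le
    have htaylor := norm_sub_sub_smul_le_of_norm_deriv2_le (fun w hw => hf w (hsub hw))
      (fun w hw => hf' w (hsub hw)) (fun w hw => hf'' w (hsub hw))
    rw [hz, smul_eq_mul] at htaylor
    have hlin : ‖(z - c) * f' c‖ = r * ‖f' c‖ := by rw [norm_mul, hz]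
    have htri := norm_le_norm_add_norm_sub' ((z - c) * f' c) (f z - f c)
    rw [norm_sub_rev ((z - c) * f' c)] at htri
    nlinarith
  have hf'c : f' c ≠ 0 := by
    intro h0
    rw [h0, norm_zero] at h
    nlinarith [norm_nonneg (f c), mul_nonneg (mul_nonneg hM hr.le) hr.le]
  have hdiff : DiffContOnCl ℂ f (ball c r) :=
    ⟨fun w hw => (hf w (ball_subset_closedBall hw)).differentiableAt.differentiableWithinAt,
      by rw [closure_ball c hr.ne']; exact fun w hw => (hf w hw).continuousAt.continuousWithinAt⟩
  have hnonconst : ∃ᶠ z in 𝓝 c, f z ≠ f c :=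
    ((hf c hc).eventually_ne hf'c).frequently.filter_mono nhdsWithin_le_nhds
  have h0 : (0 : ℂ) ∈ ball (f c) ((‖f' c‖ - M * r) * r / 2) := by
    rw [mem_ball, dist_zero_left]; linarith
  obtain ⟨z, hz, hfz⟩ := hdiff.ball_subset_image_closedBall hr hsphere hnonconst h0
  exact ⟨z, hz, hfz⟩

theorem norm_mul_sub_mul_le {R : Type*} [NormedRing R] (a b A B : R) :
    ‖a * b - A * B‖ ≤ ‖a‖ * ‖b - B‖ + ‖a - A‖ * ‖B‖ := by
  calc ‖a * b - A * B‖ = ‖a * (b - B) + (a - A) * B‖ := by noncomm_ring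
    _ ≤ ‖a‖ * ‖b - B‖ + ‖a - A‖ * ‖B‖ := by grw [norm_add_le, norm_mul_le, norm_mul_le]

theorem one_add_one_div_sub_one_three_eq_div {K : Type*} [Field K] {a b c : K} (ha : a ≠ 1)
    (hb : b ≠ 1) (hc : c ≠ 1) :
    1 + 1 / (a - 1) + 1 / (b - 1) + 1 / (c - 1)
      = (a * b * c - a - b - c + 2) / ((a - 1) * (b - 1) * (c - 1)) := by
  have ha' := sub_ne_zero.mpr ha
  have hb' := sub_ne_zero.mpr hb
  have hc' := sub_ne_zero.mpr hc
  field_simp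
  ring

theorem abs_log_mul_one_sub_sub_le {y a ε x ℓ δ : ℝ} (hy : 0 < y) (ha : |Real.log y - a| ≤ ε)
    (hx : |x| < 1) (n : ℕ)
    (h : ε + |x| ^ (n + 1) / (1 - |x|) + |a - ∑ i ∈ range n, x ^ (i + 1) / (i + 1) - ℓ| ≤ δ) :
    |Real.log (y * (1 - x)) - ℓ| ≤ δ := by
  have hseries := Real.abs_log_sub_add_sum_range_le hx n
  have h1x : 0 < 1 - x := by linarith [le_abs_self x]
  rw [Real.log_mul hy.ne' h1x.ne']
  calc |Real.log y + Real.log (1 - x) - ℓ|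
      = |(Real.log y - a) + (∑ i ∈ range n, x ^ (i + 1) / (i + 1) + Real.log (1 - x))
          + (a - ∑ i ∈ range n, x ^ (i + 1) / (i + 1) - ℓ)| := by ring_nf
    _ ≤ δ := by grw [abs_add_le, abs_add_le, ha, hseries]; exact h

namespace Complex

theorem norm_ofReal_cpow_le_self {p : ℝ} (hp : 1 ≤ p) {z : ℂ} (hz : z.re ≤ 1) :
    ‖(p : ℂ) ^ z‖ ≤ p := by
  rw [norm_cpow_eq_rpow_re_of_pos (by linarith)]
  simpa using Real.rpow_le_rpow_of_exponent_le hp hz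

theorem ofReal_cpow_ne_one {p : ℝ} (hp : 1 < p) {z : ℂ} (hz : 0 < z.re) : (p : ℂ) ^ z ≠ 1 := by
  intro h
  have := congrArg norm h
  rw [norm_cpow_eq_rpow_re_of_pos (by linarith), norm_one] at this
  exact (Real.one_lt_rpow hp hz).ne' this

theorem ofReal_cpow_eq_exp {p : ℝ} (hp : 0 < p) (z : ℂ) :
    (p : ℂ) ^ z = exp (Real.log p * z) := by
  rw [cpow_def_of_ne_zero (by exact_mod_cast hp.ne'), ofReal_log hp.le]

theorem hasDerivAt_ofReal_cpow {p : ℝ} (hp : 0 < p) (z : ℂ) :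
    HasDerivAt (fun w => (p : ℂ) ^ w) ((p : ℂ) ^ z * Real.log p) z := by
  simpa [ofReal_log hp.le] using (hasDerivAt_id z).const_cpow (Or.inl (by exact_mod_cast hp.ne'))

theorem norm_ofReal_cpow_mul_log_pow_le {p u : ℝ} (hp : 1 ≤ p) (hu : Real.log p ≤ u)
    (k : ℕ) {z : ℂ} (hz : z.re ≤ 1) : ‖(p : ℂ) ^ z * (Real.log p : ℂ) ^ k‖ ≤ p * u ^ k := by
  have hlog := Real.log_nonneg hp
  rw [norm_mul, norm_pow, norm_real, Real.norm_of_nonneg hlog]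
  exact mul_le_mul (norm_ofReal_cpow_le_self hp hz) (pow_le_pow_left₀ hlog hu k) (by positivity)
    (by linarith)

theorem norm_ofReal_cpow_mul_log_sub_le {p ℓ δ r : ℝ} {z A : ℂ} (hp : 1 ≤ p)
    (hz : z.re ≤ 1) (hA : ‖(p : ℂ) ^ z - A‖ ≤ r) (hℓ : |Real.log p - ℓ| ≤ δ) :
    ‖(p : ℂ) ^ z * Real.log p - A * ℓ‖ ≤ p * δ + r * |ℓ| := by
  grw [norm_mul_sub_mul_le, norm_ofReal_cpow_le_self hp hz, hA, ← ofReal_sub, norm_real,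
    norm_real, Real.norm_eq_abs, Real.norm_eq_abs, hℓ]

theorem norm_ofReal_cpow_sub_exp_le {p ℓ δ : ℝ} (hp : 1 ≤ p) {z : ℂ} (hz : z.re ≤ 1)
    (hℓ : |Real.log p - ℓ| ≤ δ) (hδ : δ * ‖z‖ ≤ 1) :
    ‖(p : ℂ) ^ z - exp (ℓ * z)‖ ≤ 2 * p * δ * ‖z‖ := by
  have hdiff : ‖(ℓ - Real.log p : ℂ) * z‖ ≤ δ * ‖z‖ := by
    rw [norm_mul, ← ofReal_sub, norm_real, Real.norm_eq_abs, abs_sub_comm]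
    gcongr
  have hexp : exp (ℓ * z) = (p : ℂ) ^ z * exp ((ℓ - Real.log p : ℂ) * z) := by
    rw [ofReal_cpow_eq_exp (by linarith), ← exp_add]; ring_nf
  calc ‖(p : ℂ) ^ z - exp (ℓ * z)‖ = ‖(p : ℂ) ^ z‖ * ‖exp ((ℓ - Real.log p : ℂ) * z) - 1‖ := by
        rw [hexp, ← norm_mul, ← norm_neg]; ring_nf
    _ ≤ p * (2 * (δ * ‖z‖)) := by
        gcongr
        · exact norm_ofReal_cpow_le_self hp hz
        · exact (norm_exp_sub_one_le (hdiff.trans hδ)).trans (by gcongr)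
    _ = 2 * p * δ * ‖z‖ := by ring

/-- The three error terms in `hr` come from `ℓ ≈ log p`, from the Taylor remainder of `exp`, and
from rounding the Taylor polynomial to `A`. -/
theorem norm_ofReal_cpow_sub_le {p ℓ δ s r : ℝ} {z A : ℂ} (n : ℕ) (hp : 1 ≤ p)
    (hz : z.re ≤ 1) (hzs : ‖z‖ ≤ s) (hℓ : |Real.log p - ℓ| ≤ δ) (hδ : δ * s ≤ 1)
    (hn : |ℓ| * s / (n + 1) ≤ 1 / 2)
    (hr : 2 * p * δ * s + (|ℓ| * s) ^ n / n.factorial * 2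
      + ‖∑ m ∈ range n, ((ℓ : ℂ) * z) ^ m / m.factorial - A‖ ≤ r) :
    ‖(p : ℂ) ^ z - A‖ ≤ r := by
  set T := ∑ m ∈ range n, ((ℓ : ℂ) * z) ^ m / m.factorial
  have hδ0 : 0 ≤ δ := (abs_nonneg _).trans hℓ
  have hx : ‖(ℓ : ℂ) * z‖ ≤ |ℓ| * s := by rw [norm_mul, norm_real, Real.norm_eq_abs]; gcongr
  have hshift := norm_ofReal_cpow_sub_exp_le hp hz hℓ ((mul_le_mul_of_nonneg_left hzs hδ0).trans hδ)
  have htaylor : ‖exp (ℓ * z) - T‖ ≤ ‖(ℓ : ℂ) * z‖ ^ n / n.factorial * 2 :=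
    exp_bound' <| calc ‖(ℓ : ℂ) * z‖ / (n.succ : ℝ) ≤ |ℓ| * s / (n + 1) := by push_cast; gcongr
      _ ≤ 1 / 2 := hn
  calc ‖(p : ℂ) ^ z - A‖ ≤ ‖(p : ℂ) ^ z - exp (ℓ * z)‖ + ‖exp (ℓ * z) - T‖ + ‖T - A‖ := by
        grw [norm_sub_le_norm_sub_add_norm_sub _ (exp (ℓ * z)),
          norm_sub_le_norm_sub_add_norm_sub (exp _) T, add_assoc]
    _ ≤ r := by grw [hshift, htaylor, hx, hzs]; exact hr

theorem abs_re_sub_le_and_abs_im_sub_le {z c : ℂ} {r : ℝ} (h : z ∈ closedBall c r) :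
    |z.re - c.re| ≤ r ∧ |z.im - c.im| ≤ r := by
  rw [mem_closedBall, dist_eq_norm] at h
  exact ⟨(abs_re_le_norm (z - c)).trans h, (abs_im_le_norm (z - c)).trans h⟩

end Complex

namespace TwoThreeFive

theorem log_four_approx : |Real.log 4 - 2 * (287209 / 414355)| ≤ 2 / 10 ^ 10 := by
  rw [show (4 : ℝ) = 2 ^ 2 by norm_num, Real.log_pow, Nat.cast_ofNat, ← mul_sub, abs_mul,
    abs_two]
  linarith [Real.log_two_near_10]

theorem log_two_approx : |Real.log 2 - 0.693147| ≤ 2e-7 := by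
  have := Real.log_two_near_10
  rw [abs_le] at this ⊢
  constructor <;> norm_num at this ⊢ <;> linarith

theorem log_three_approx : |Real.log 3 - 1.098612| ≤ 4e-7 := by
  have := abs_log_mul_one_sub_sub_le (x := 1 / 4) (ℓ := 1.098612) (δ := 4e-7) (by norm_num)
    log_four_approx (by norm_num) 12 (by norm_num [sum_range_succ, abs_le])
  norm_num at this ⊢
  exact this

theorem log_five_approx : |Real.log 5 - 1.609438| ≤ 2e-7 := by
  have := abs_log_mul_one_sub_sub_le (x := -1 / 4) (ℓ := 1.609438) (δ := 2e-7) (by norm_num)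
    log_four_approx (by norm_num) 12 (by norm_num [sum_range_succ, abs_le])
  norm_num at this ⊢
  exact this

theorem log_thirty_approx : |Real.log 30 - 3.401197| ≤ 1e-6 := by
  rw [show (30 : ℝ) = 2 * 3 * 5 by norm_num, Real.log_mul (by norm_num) (by norm_num),
    Real.log_mul (by norm_num) (by norm_num)]
  have h2 := log_two_approx
  have h3 := log_three_approx
  have h5 := log_five_approx
  rw [abs_le] at *
  constructor <;> linarith

noncomputable def F (z : ℂ) : ℂ := 30 ^ z - 2 ^ z - 3 ^ z - 5 ^ z + 2

noncomputable def F' (z : ℂ) : ℂ :=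
  30 ^ z * Real.log 30 - 2 ^ z * Real.log 2 - 3 ^ z * Real.log 3 - 5 ^ z * Real.log 5

noncomputable def F'' (z : ℂ) : ℂ :=
  30 ^ z * (Real.log 30 : ℂ) ^ 2 - 2 ^ z * (Real.log 2 : ℂ) ^ 2 - 3 ^ z * (Real.log 3 : ℂ) ^ 2
    - 5 ^ z * (Real.log 5 : ℂ) ^ 2

theorem thirty_cpow_eq (z : ℂ) : (30 : ℂ) ^ z = 2 ^ z * 3 ^ z * 5 ^ z := by
  have h₆ := mul_cpow_ofReal_nonneg (a := 2) (b := 3) (by norm_num) (by norm_num) z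
  have h₃₀ := mul_cpow_ofReal_nonneg (a := 6) (b := 5) (by norm_num) (by norm_num) z
  push_cast at h₆ h₃₀
  norm_num at h₆ h₃₀
  rw [h₃₀, h₆]

theorem hasDerivAt_F (z : ℂ) : HasDerivAt F (F' z) z := by
  have h (p : ℝ) (hp : 0 < p) := hasDerivAt_ofReal_cpow hp z
  have h₃₀ := h 30 (by norm_num)
  have h₂ := h 2 (by norm_num)
  have h₃ := h 3 (by norm_num)
  have h₅ := h 5 (by norm_num)
  push_cast at h₃₀ h₂ h₃ h₅
  exact (((h₃₀.sub h₂).sub h₃).sub h₅).add_const 2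

theorem hasDerivAt_F' (z : ℂ) : HasDerivAt F' (F'' z) z := by
  have h (p : ℝ) (hp : 0 < p) := (hasDerivAt_ofReal_cpow hp z).mul_const (Real.log p : ℂ)
  have h₃₀ := h 30 (by norm_num)
  have h₂ := h 2 (by norm_num)
  have h₃ := h 3 (by norm_num)
  have h₅ := h 5 (by norm_num)
  push_cast at h₃₀ h₂ h₃ h₅
  exact (((h₃₀.sub h₂).sub h₃).sub h₅).congr_deriv (by unfold F''; ring)

theorem norm_F''_le {z : ℂ} (hz : z.re ≤ 1) : ‖F'' z‖ ≤ 400 := by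
  have h (p ℓ δ : ℝ) (hp : 1 ≤ p) (hℓ : |Real.log p - ℓ| ≤ δ) :=
    norm_ofReal_cpow_mul_log_pow_le (u := ℓ + δ) hp (by linarith [(abs_le.mp hℓ).2]) 2 hz
  have h₃₀ := h 30 _ _ (by norm_num) log_thirty_approx
  have h₂ := h 2 _ _ (by norm_num) log_two_approx
  have h₃ := h 3 _ _ (by norm_num) log_three_approx
  have h₅ := h 5 _ _ (by norm_num) log_five_approx
  push_cast at h₃₀ h₂ h₃ h₅
  unfold F''
  grw [norm_sub_le, norm_sub_le, norm_sub_le, h₃₀, h₂, h₃, h₅]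
  norm_num

theorem norm_F_le {z A₃₀ A₂ A₃ A₅ : ℂ} {r₃₀ r₂ r₃ r₅ : ℝ} (h₃₀ : ‖(30 : ℂ) ^ z - A₃₀‖ ≤ r₃₀)
    (h₂ : ‖(2 : ℂ) ^ z - A₂‖ ≤ r₂) (h₃ : ‖(3 : ℂ) ^ z - A₃‖ ≤ r₃)
    (h₅ : ‖(5 : ℂ) ^ z - A₅‖ ≤ r₅) :
    ‖F z‖ ≤ ‖A₃₀ - A₂ - A₃ - A₅ + 2‖ + (r₃₀ + r₂ + r₃ + r₅) := by
  have hsplit : F z = (30 ^ z - A₃₀) - (2 ^ z - A₂) - (3 ^ z - A₃) - (5 ^ z - A₅)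
      + (A₃₀ - A₂ - A₃ - A₅ + 2) := by unfold F; ring
  rw [hsplit]
  grw [norm_add_le, norm_sub_le, norm_sub_le, norm_sub_le, h₃₀, h₂, h₃, h₅]
  linarith

theorem norm_F'_ge {z A₃₀ A₂ A₃ A₅ : ℂ} {r₃₀ r₂ r₃ r₅ ℓ₃₀ ℓ₂ ℓ₃ ℓ₅ δ₃₀ δ₂ δ₃ δ₅ : ℝ}
    (hz : z.re ≤ 1) (h₃₀ : ‖(30 : ℂ) ^ z - A₃₀‖ ≤ r₃₀) (h₂ : ‖(2 : ℂ) ^ z - A₂‖ ≤ r₂)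
    (h₃ : ‖(3 : ℂ) ^ z - A₃‖ ≤ r₃) (h₅ : ‖(5 : ℂ) ^ z - A₅‖ ≤ r₅)
    (hℓ₃₀ : |Real.log 30 - ℓ₃₀| ≤ δ₃₀) (hℓ₂ : |Real.log 2 - ℓ₂| ≤ δ₂)
    (hℓ₃ : |Real.log 3 - ℓ₃| ≤ δ₃) (hℓ₅ : |Real.log 5 - ℓ₅| ≤ δ₅) :
    ‖A₃₀ * ℓ₃₀ - A₂ * ℓ₂ - A₃ * ℓ₃ - A₅ * ℓ₅‖
      - (30 * δ₃₀ + r₃₀ * |ℓ₃₀| + (2 * δ₂ + r₂ * |ℓ₂|) + (3 * δ₃ + r₃ * |ℓ₃|)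
        + (5 * δ₅ + r₅ * |ℓ₅|)) ≤ ‖F' z‖ := by
  have h (p ℓ δ r : ℝ) (A : ℂ) (hp : 1 ≤ p) (hA : ‖(p : ℂ) ^ z - A‖ ≤ r)
      (hℓ : |Real.log p - ℓ| ≤ δ) := norm_ofReal_cpow_mul_log_sub_le hp hz hA hℓ
  have e₃₀ := h 30 _ _ _ _ (by norm_num) (by exact_mod_cast h₃₀) hℓ₃₀
  have e₂ := h 2 _ _ _ _ (by norm_num) (by exact_mod_cast h₂) hℓ₂
  have e₃ := h 3 _ _ _ _ (by norm_num) (by exact_mod_cast h₃) hℓ₃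
  have e₅ := h 5 _ _ _ _ (by norm_num) (by exact_mod_cast h₅) hℓ₅
  push_cast at e₃₀ e₂ e₃ e₅
  have hsplit : F' z - (A₃₀ * ℓ₃₀ - A₂ * ℓ₂ - A₃ * ℓ₃ - A₅ * ℓ₅)
      = (30 ^ z * Real.log 30 - A₃₀ * ℓ₃₀) - (2 ^ z * Real.log 2 - A₂ * ℓ₂)
        - (3 ^ z * Real.log 3 - A₃ * ℓ₃) - (5 ^ z * Real.log 5 - A₅ * ℓ₅) := by
    unfold F'; ring
  have herr := norm_le_norm_add_norm_sub' (A₃₀ * ℓ₃₀ - A₂ * ℓ₂ - A₃ * ℓ₃ - A₅ * ℓ₅) (F' z)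
  rw [norm_sub_rev _ (F' z), hsplit] at herr
  grw [norm_sub_le, norm_sub_le, norm_sub_le, e₃₀, e₂, e₃, e₅] at herr
  linarith

def c₀ : ℂ := ⟨0.446, 2.8144⟩

theorem norm_c₀_le : ‖c₀‖ ≤ 2.85 := by
  refine (sq_le_sq₀ (norm_nonneg _) (by norm_num)).mp ?_
  rw [← normSq_eq_norm_sq]
  norm_num [c₀, normSq_apply]

theorem bounds_of_mem_closedBall_c₀ {z : ℂ} (hz : z ∈ closedBall c₀ 1e-3) :
    0.445 ≤ z.re ∧ z.re ≤ 0.447 ∧ 2.8134 ≤ z.im ∧ z.im ≤ 2.8154 := by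
  obtain ⟨hre, him⟩ := abs_re_sub_le_and_abs_im_sub_le hz
  rw [abs_le] at hre him
  norm_num [c₀] at hre him
  refine ⟨?_, ?_, ?_, ?_⟩ <;> linarith

theorem two_cpow_c₀ : ‖(2 : ℂ) ^ c₀ - ⟨-0.5053, 1.2651⟩‖ ≤ 1e-4 := by
  have := norm_ofReal_cpow_sub_le (p := 2) (A := ⟨-0.5053, 1.2651⟩) (r := 1e-4) 22
    (by norm_num) (by norm_num [c₀]) norm_c₀_le log_two_approx (by norm_num)
    (by norm_num [abs_of_pos])
    (by grw [norm_le_abs_re_add_abs_im]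
        norm_num [c₀, sum_range_succ, mul_re, mul_im, pow_succ, Nat.factorial, abs_le])
  simpa using this

theorem three_cpow_c₀ : ‖(3 : ℂ) ^ c₀ - ⟨-1.6303, 0.0810⟩‖ ≤ 1e-4 := by
  have := norm_ofReal_cpow_sub_le (p := 3) (A := ⟨-1.6303, 0.0810⟩) (r := 1e-4) 22
    (by norm_num) (by norm_num [c₀]) norm_c₀_le log_three_approx (by norm_num)
    (by norm_num [abs_of_pos])
    (by grw [norm_le_abs_re_add_abs_im]
        norm_num [c₀, sum_range_succ, mul_re, mul_im, pow_succ, Nat.factorial, abs_le])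
  simpa using this

theorem five_cpow_c₀ : ‖(5 : ℂ) ^ c₀ - ⟨-0.3726, -2.0158⟩‖ ≤ 1e-4 := by
  have := norm_ofReal_cpow_sub_le (p := 5) (A := ⟨-0.3726, -2.0158⟩) (r := 1e-4) 22
    (by norm_num) (by norm_num [c₀]) norm_c₀_le log_five_approx (by norm_num)
    (by norm_num [abs_of_pos])
    (by grw [norm_le_abs_re_add_abs_im]
        norm_num [c₀, sum_range_succ, mul_re, mul_im, pow_succ, Nat.factorial, abs_le])
  simpa using this

theorem thirty_cpow_c₀ : ‖(30 : ℂ) ^ c₀ - ⟨-4.5087, -0.6701⟩‖ ≤ 4e-4 := by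
  have := norm_ofReal_cpow_sub_le (p := 30) (A := ⟨-4.5087, -0.6701⟩) (r := 4e-4) 40
    (by norm_num) (by norm_num [c₀]) norm_c₀_le log_thirty_approx (by norm_num)
    (by norm_num [abs_of_pos])
    (by grw [norm_le_abs_re_add_abs_im]
        norm_num [c₀, sum_range_succ, mul_re, mul_im, pow_succ, Nat.factorial, abs_le])
  simpa using this

theorem norm_F_c₀_le : ‖F c₀‖ ≤ 0.002 := by
  grw [norm_F_le thirty_cpow_c₀ two_cpow_c₀ three_cpow_c₀ five_cpow_c₀,
    norm_le_abs_re_add_abs_im]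
  norm_num [abs_le]

theorem le_norm_F'_c₀ : 12.5 ≤ ‖F' c₀‖ := by
  refine le_trans ?_ (norm_F'_ge (by norm_num [c₀]) thirty_cpow_c₀ two_cpow_c₀ three_cpow_c₀
    five_cpow_c₀ log_thirty_approx log_two_approx log_three_approx log_five_approx)
  grw [← abs_re_le_norm]
  norm_num [abs_le]

end TwoThreeFive

open TwoThreeFive in
theorem exists_complex_zero_two_three_five :
    ∃ z : ℂ, 0.44 < z.re ∧ z.re < 0.45 ∧ 2.81 < z.im ∧ z.im < 2.82 ∧
      1 + 1 / ((2 : ℂ) ^ z - 1) + 1 / ((3 : ℂ) ^ z - 1) + 1 / ((5 : ℂ) ^ z - 1) = 0 := by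
  obtain ⟨z, hz, hFz⟩ := exists_mem_closedBall_eq_zero_of_deriv_bounds (c := c₀) (r := 1e-3)
    (M := 400) (by norm_num) (fun z _ => hasDerivAt_F z) (fun z _ => hasDerivAt_F' z)
    (fun z hz => norm_F''_le (by linarith [(bounds_of_mem_closedBall_c₀ hz).2.1]))
    (by linarith [norm_F_c₀_le, le_norm_F'_c₀])
  obtain ⟨hre₁, hre₂, him₁, him₂⟩ := bounds_of_mem_closedBall_c₀ hz
  refine ⟨z, by linarith, by linarith, by linarith, by linarith, ?_⟩
  have hne (p : ℝ) (hp : 1 < p) : (p : ℂ) ^ z ≠ 1 := ofReal_cpow_ne_one hp (by linarith)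
  rw [one_add_one_div_sub_one_three_eq_div (by exact_mod_cast hne 2 (by norm_num))
    (by exact_mod_cast hne 3 (by norm_num)) (by exact_mod_cast hne 5 (by norm_num)),
    ← thirty_cpow_eq, show (30 : ℂ) ^ z - 2 ^ z - 3 ^ z - 5 ^ z + 2 = 0 from hFz, zero_div]
end
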